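/- arXiv:0807.3895 — 7 statements merged into one kernel-verified Lean document; each statement's English description precedes it below -/
import Mathlib

section
/- For any nonnegative integer m and complex numbers λ₁, λ₂ with λ₁ ≠ λ₂, the function Ψ(x₁,x₂) = (λ₁−λ₂)^{−m} · (D − 2m/(x₁−x₂))(D − 2(m−1)/(x₁−x₂))⋯(D − 2/(x₁−x₂)) exp(λ₁x₁+λ₂x₂), where D = ∂/∂x₁ − ∂/∂x₂, satisfies the Schrödinger equation (−∂²/∂x₁² − ∂²/∂x₂² + 2m(m+1)/(x₁−x₂)²) Ψ = −(λ₁²+λ₂²) Ψ on the region x₁ ≠ x₂. -/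
/-!
Off the diagonal, `D` acts on `exp(λ₁x₁ + λ₂x₂) g(x₁ - x₂)` as `g ↦ μ g + 2 g'` with `μ = λ₁ - λ₂`,
so `Ψ = (λ₁ - λ₂)^{-m} exp(λ₁x₁ + λ₂x₂) f_m(x₁ - x₂)`, where `f_0 = 1` and
`f_{k+1} = μ f_k + 2 f_k' - 2(k+1) f_k / z`. On such functions the Schrödinger equation is the
ODE `f'' + μ f' - m(m+1) f / z² = 0`. The first-order factor `g ↦ μ g + 2 g' - 2a g / z` is a
Darboux transformation: it intertwines the operators `g ↦ g'' + μ g' - c g / z²` with couplings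
`c = a(a-1)` and `c = a(a+1)`, so the ODE propagates from `f_0 = 1` (coupling `0`) to `f_m`.
-/

open Complex

/-- The operator `D = ∂/∂x₁ - ∂/∂x₂` acting on functions of two complex variables. -/
noncomputable def Dop (f : ℂ → ℂ → ℂ) : ℂ → ℂ → ℂ :=
  fun x₁ x₂ => deriv (fun s => f s x₂) x₁ - deriv (fun s => f x₁ s) x₂

/-- `BAfac lam₁ lam₂ k = (D - 2k/(x₁-x₂)) ⋯ (D - 2/(x₁-x₂)) exp(λ₁x₁+λ₂x₂)`,
the product of first-order factors applied left to right (the factor with the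
smallest coefficient acting first on the exponential). -/
noncomputable def BAfac (lam₁ lam₂ : ℂ) : ℕ → (ℂ → ℂ → ℂ)
  | 0 => fun x₁ x₂ => Complex.exp (lam₁ * x₁ + lam₂ * x₂)
  | (k+1) => fun x₁ x₂ =>
      Dop (BAfac lam₁ lam₂ k) x₁ x₂
        - (2 * ((k : ℂ) + 1) / (x₁ - x₂)) * BAfac lam₁ lam₂ k x₁ x₂

/-- The two-particle rational Baker–Akhiezer function
`Ψ^{(2)}_m = (λ₁-λ₂)^{-m} (D - 2m/(x₁-x₂))⋯(D - 2/(x₁-x₂)) exp(λ₁x₁+λ₂x₂)`. -/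
noncomputable def Psi2 (m : ℕ) (lam₁ lam₂ : ℂ) : ℂ → ℂ → ℂ :=
  fun x₁ x₂ => (lam₁ - lam₂) ^ (-(m : ℤ)) * BAfac lam₁ lam₂ m x₁ x₂

open Filter Topology

section Calculus

variable {𝕜 : Type*} [NontriviallyNormedField 𝕜]

lemma hasDerivAt_const_div_pow (c : 𝕜) (n : ℕ) {w : 𝕜} (hw : w ≠ 0) :
    HasDerivAt (fun w => c / w ^ n) (-(n * c) / w ^ (n + 1)) w := by
  refine ((hasDerivAt_const w c).fun_div (hasDerivAt_pow n w) (pow_ne_zero n hw)).congr_deriv ?_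
  rcases n with _ | n
  · simp
  · field_simp
    push_cast
    ring

lemma hasDerivAt_const_div (c : 𝕜) {w : 𝕜} (hw : w ≠ 0) :
    HasDerivAt (fun w => c / w) (-c / w ^ 2) w := by
  simpa using hasDerivAt_const_div_pow c 1 hw

end Calculus

lemma DifferentiableOn.hasDerivAt_of_ne_zero {f : ℂ → ℂ} (hf : DifferentiableOn ℂ f {0}ᶜ)
    {w : ℂ} (hw : w ≠ 0) : HasDerivAt f (_root_.deriv f w) w :=
  (hf.differentiableAt (isOpen_compl_singleton.mem_nhds hw)).hasDerivAt

section OffDiagonal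

variable {α β : Type*} [TopologicalSpace α] [T1Space α] {F G : α → α → β} {x₁ x₂ : α}

lemma eventuallyEq_fst_of_offDiag (h : ∀ a b, a ≠ b → F a b = G a b) (hx : x₁ ≠ x₂) :
    (fun s => F s x₂) =ᶠ[𝓝 x₁] fun s => G s x₂ :=
  (eventually_ne_nhds hx).mono fun s hs => h s x₂ hs

lemma eventuallyEq_snd_of_offDiag (h : ∀ a b, a ≠ b → F a b = G a b) (hx : x₁ ≠ x₂) :
    (fun s => F x₁ s) =ᶠ[𝓝 x₂] fun s => G x₁ s :=
  (eventually_ne_nhds hx.symm).mono fun s hs => h x₁ s hs.symm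

end OffDiagonal

lemma Dop_congr_offDiag {F G : ℂ → ℂ → ℂ} {x₁ x₂ : ℂ} (h : ∀ a b, a ≠ b → F a b = G a b)
    (hx : x₁ ≠ x₂) : Dop F x₁ x₂ = Dop G x₁ x₂ := by
  rw [Dop, Dop, (eventuallyEq_fst_of_offDiag h hx).deriv_eq,
    (eventuallyEq_snd_of_offDiag h hx).deriv_eq]

noncomputable def planeWaveMul (lam₁ lam₂ : ℂ) (g : ℂ → ℂ) (x₁ x₂ : ℂ) : ℂ :=
  exp (lam₁ * x₁ + lam₂ * x₂) * g (x₁ - x₂)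

section PlaneWave

variable {lam₁ lam₂ x₁ x₂ : ℂ} {g : ℂ → ℂ}

lemma hasDerivAt_planeWaveMul_fst (hg : DifferentiableAt ℂ g (x₁ - x₂)) :
    HasDerivAt (fun s => planeWaveMul lam₁ lam₂ g s x₂)
      (planeWaveMul lam₁ lam₂ (fun z => lam₁ * g z + deriv g z) x₁ x₂) x₁ := by
  have hexp : HasDerivAt (fun s => exp (lam₁ * s + lam₂ * x₂))
      (exp (lam₁ * x₁ + lam₂ * x₂) * (lam₁ * 1)) x₁ :=
    (((hasDerivAt_id x₁).const_mul lam₁).add_const _).cexp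
  refine (hexp.fun_mul (hg.hasDerivAt.comp_sub_const x₁ x₂)).congr_deriv ?_
  simp only [planeWaveMul]
  ring

lemma hasDerivAt_planeWaveMul_snd (hg : DifferentiableAt ℂ g (x₁ - x₂)) :
    HasDerivAt (fun s => planeWaveMul lam₁ lam₂ g x₁ s)
      (planeWaveMul lam₁ lam₂ (fun z => lam₂ * g z - deriv g z) x₁ x₂) x₂ := by
  have hexp : HasDerivAt (fun s => exp (lam₁ * x₁ + lam₂ * s))
      (exp (lam₁ * x₁ + lam₂ * x₂) * (lam₂ * 1)) x₂ :=
    (((hasDerivAt_id x₂).const_mul lam₂).const_add _).cexp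
  refine (hexp.fun_mul (hg.hasDerivAt.comp_const_sub x₁ x₂)).congr_deriv ?_
  simp only [planeWaveMul]
  ring

lemma Dop_planeWaveMul (hg : DifferentiableAt ℂ g (x₁ - x₂)) :
    Dop (planeWaveMul lam₁ lam₂ g) x₁ x₂
      = planeWaveMul lam₁ lam₂ (fun z => (lam₁ - lam₂) * g z + 2 * deriv g z) x₁ x₂ := by
  rw [Dop, (hasDerivAt_planeWaveMul_fst hg).deriv, (hasDerivAt_planeWaveMul_snd hg).deriv]
  simp only [planeWaveMul]
  ring

variable {U : Set ℂ}

lemma deriv_deriv_planeWaveMul_fst (hU : IsOpen U) (hg : DifferentiableOn ℂ g U)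
    (hx : x₁ - x₂ ∈ U) :
    deriv (deriv fun s => planeWaveMul lam₁ lam₂ g s x₂) x₁
      = planeWaveMul lam₁ lam₂
          (fun z => lam₁ ^ 2 * g z + 2 * lam₁ * deriv g z + deriv (deriv g) z) x₁ x₂ := by
  have hnear : ∀ᶠ s in 𝓝 x₁, s - x₂ ∈ U :=
    (continuousAt_id.sub continuousAt_const).preimage_mem_nhds (hU.mem_nhds hx)
  have hfirst : deriv (fun s => planeWaveMul lam₁ lam₂ g s x₂)
      =ᶠ[𝓝 x₁] fun s => planeWaveMul lam₁ lam₂ (fun z => lam₁ * g z + deriv g z) s x₂ :=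
    hnear.mono fun s hs =>
      (hasDerivAt_planeWaveMul_fst (hg.differentiableAt (hU.mem_nhds hs))).deriv
  have hg₀ := hg.differentiableAt (hU.mem_nhds hx)
  have hg₁ := (hg.deriv hU).differentiableAt (hU.mem_nhds hx)
  rw [hfirst.deriv_eq, (hasDerivAt_planeWaveMul_fst (by fun_prop)).deriv]
  simp only [planeWaveMul]
  rw [deriv_fun_add (by fun_prop) hg₁, deriv_const_mul _ hg₀]
  ring

lemma deriv_deriv_planeWaveMul_snd (hU : IsOpen U) (hg : DifferentiableOn ℂ g U)
    (hx : x₁ - x₂ ∈ U) :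
    deriv (deriv fun s => planeWaveMul lam₁ lam₂ g x₁ s) x₂
      = planeWaveMul lam₁ lam₂
          (fun z => lam₂ ^ 2 * g z - 2 * lam₂ * deriv g z + deriv (deriv g) z) x₁ x₂ := by
  have hnear : ∀ᶠ s in 𝓝 x₂, x₁ - s ∈ U :=
    (continuousAt_const.sub continuousAt_id).preimage_mem_nhds (hU.mem_nhds hx)
  have hfirst : deriv (fun s => planeWaveMul lam₁ lam₂ g x₁ s)
      =ᶠ[𝓝 x₂] fun s => planeWaveMul lam₁ lam₂ (fun z => lam₂ * g z - deriv g z) x₁ s :=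
    hnear.mono fun s hs =>
      (hasDerivAt_planeWaveMul_snd (hg.differentiableAt (hU.mem_nhds hs))).deriv
  have hg₀ := hg.differentiableAt (hU.mem_nhds hx)
  have hg₁ := (hg.deriv hU).differentiableAt (hU.mem_nhds hx)
  rw [hfirst.deriv_eq, (hasDerivAt_planeWaveMul_snd (by fun_prop)).deriv]
  simp only [planeWaveMul]
  rw [deriv_fun_sub (by fun_prop) hg₁, deriv_const_mul _ hg₀]
  ring

end PlaneWave

noncomputable def darbouxOp (μ a : ℂ) (g : ℂ → ℂ) (z : ℂ) : ℂ :=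
  μ * g z + 2 * deriv g z - 2 * a / z * g z

noncomputable def relativeOp (μ c : ℂ) (g : ℂ → ℂ) (z : ℂ) : ℂ :=
  deriv (deriv g) z + μ * deriv g z - c / z ^ 2 * g z

section Darboux

variable {μ : ℂ} {g : ℂ → ℂ}

lemma DifferentiableOn.darbouxOp (hg : DifferentiableOn ℂ g {0}ᶜ) (a : ℂ) :
    DifferentiableOn ℂ (darbouxOp μ a g) {0}ᶜ := by
  have hg' := hg.deriv isOpen_compl_singleton
  have hcoeff : DifferentiableOn ℂ (fun z : ℂ => 2 * a / z) {0}ᶜ :=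
    (differentiableOn_const _).div differentiableOn_id fun _ hz => hz
  unfold _root_.darbouxOp
  fun_prop

lemma hasDerivAt_darbouxOp (hg : DifferentiableOn ℂ g {0}ᶜ) (a : ℂ) {w : ℂ} (hw : w ≠ 0) :
    HasDerivAt (darbouxOp μ a g)
      (μ * deriv g w + 2 * deriv (deriv g) w + 2 * a / w ^ 2 * g w
        - 2 * a / w * deriv g w) w := by
  have hg₁ := hg.deriv isOpen_compl_singleton
  refine (((hg.hasDerivAt_of_ne_zero hw).const_mul μ).fun_add
    ((hg₁.hasDerivAt_of_ne_zero hw).const_mul 2) |>.fun_sub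
    ((hasDerivAt_const_div (2 * a) hw).fun_mul (hg.hasDerivAt_of_ne_zero hw))).congr_deriv ?_
  ring

lemma hasDerivAt_deriv_darbouxOp (hg : DifferentiableOn ℂ g {0}ᶜ) (a : ℂ) {z : ℂ}
    (hz : z ≠ 0) :
    HasDerivAt (deriv (darbouxOp μ a g))
      (μ * deriv (deriv g) z + 2 * deriv (deriv (deriv g)) z - 4 * a / z ^ 3 * g z
        + 4 * a / z ^ 2 * deriv g z - 2 * a / z * deriv (deriv g) z) z := by
  have hg₁ := hg.deriv isOpen_compl_singleton
  have hg₂ := hg₁.deriv isOpen_compl_singleton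
  refine HasDerivAt.congr_of_eventuallyEq ?_
    ((eventually_ne_nhds hz).mono fun w hw => (hasDerivAt_darbouxOp hg a hw).deriv)
  refine (((hg₁.hasDerivAt_of_ne_zero hz).const_mul μ).fun_add
    ((hg₂.hasDerivAt_of_ne_zero hz).const_mul 2) |>.fun_add
    ((hasDerivAt_const_div_pow (2 * a) 2 hz).fun_mul (hg.hasDerivAt_of_ne_zero hz)) |>.fun_sub
    ((hasDerivAt_const_div (2 * a) hz).fun_mul (hg₁.hasDerivAt_of_ne_zero hz))).congr_deriv ?_
  field_simp
  ring

lemma hasDerivAt_relativeOp (hg : DifferentiableOn ℂ g {0}ᶜ) (c : ℂ) {z : ℂ} (hz : z ≠ 0) :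
    HasDerivAt (relativeOp μ c g)
      (deriv (deriv (deriv g)) z + μ * deriv (deriv g) z
        + 2 * c / z ^ 3 * g z - c / z ^ 2 * deriv g z) z := by
  have hg₁ := hg.deriv isOpen_compl_singleton
  have hg₂ := hg₁.deriv isOpen_compl_singleton
  refine ((hg₂.hasDerivAt_of_ne_zero hz).fun_add ((hg₁.hasDerivAt_of_ne_zero hz).const_mul μ)
    |>.fun_sub ((hasDerivAt_const_div_pow c 2 hz).fun_mul
      (hg.hasDerivAt_of_ne_zero hz))).congr_deriv ?_
  field_simp
  ring

lemma relativeOp_darbouxOp (hg : DifferentiableOn ℂ g {0}ᶜ) (a : ℂ) {z : ℂ} (hz : z ≠ 0) :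
    relativeOp μ (a * (a + 1)) (darbouxOp μ a g) z
      = darbouxOp μ a (relativeOp μ (a * (a - 1)) g) z := by
  rw [relativeOp, (hasDerivAt_deriv_darbouxOp hg a hz).deriv,
    (hasDerivAt_darbouxOp hg a hz).deriv]
  simp only [darbouxOp]
  rw [(hasDerivAt_relativeOp hg _ hz).deriv]
  simp only [relativeOp]
  field_simp
  ring

end Darboux

noncomputable def BAprofile (μ : ℂ) : ℕ → ℂ → ℂ
  | 0 => fun _ => 1
  | k + 1 => darbouxOp μ ((k : ℂ) + 1) (BAprofile μ k)

lemma differentiableOn_BAprofile (μ : ℂ) (k : ℕ) :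
    DifferentiableOn ℂ (BAprofile μ k) {0}ᶜ := by
  induction k with
  | zero => exact differentiableOn_const 1
  | succ k ih => exact ih.darbouxOp _

lemma relativeOp_BAprofile (μ : ℂ) (k : ℕ) {z : ℂ} (hz : z ≠ 0) :
    relativeOp μ (k * (k + 1)) (BAprofile μ k) z = 0 := by
  induction k generalizing z with
  | zero => simp [relativeOp, BAprofile]
  | succ k ih =>
    have hvanish : relativeOp μ (((k : ℂ) + 1) * ((k : ℂ) + 1 - 1)) (BAprofile μ k)
        =ᶠ[𝓝 z] fun _ => 0 := by
      filter_upwards [eventually_ne_nhds hz] with w hw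
      rw [add_sub_cancel_right, mul_comm]
      exact ih hw
    push_cast
    rw [BAprofile, relativeOp_darbouxOp (differentiableOn_BAprofile μ k) _ hz, darbouxOp,
      hvanish.deriv_eq, hvanish.eq_of_nhds, deriv_const]
    ring

lemma BAfac_eq_planeWaveMul (lam₁ lam₂ : ℂ) (k : ℕ) {x₁ x₂ : ℂ} (hx : x₁ ≠ x₂) :
    BAfac lam₁ lam₂ k x₁ x₂ = planeWaveMul lam₁ lam₂ (BAprofile (lam₁ - lam₂) k) x₁ x₂ := by
  induction k generalizing x₁ x₂ with
  | zero => simp [BAfac, BAprofile, planeWaveMul]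
  | succ k ih =>
    have hdiff := (differentiableOn_BAprofile (lam₁ - lam₂) k).differentiableAt
      (isOpen_compl_singleton.mem_nhds (sub_ne_zero.mpr hx))
    simp only [BAfac]
    rw [Dop_congr_offDiag (F := BAfac lam₁ lam₂ k) (fun a b hab => ih hab) hx,
      Dop_planeWaveMul hdiff, ih hx]
    simp only [planeWaveMul, BAprofile, darbouxOp]
    ring

theorem schroedinger_of_eq_planeWaveMul {F : ℂ → ℂ → ℂ} {g : ℂ → ℂ} {lam₁ lam₂ x₁ x₂ : ℂ}
    (c : ℂ) (hg : DifferentiableOn ℂ g {0}ᶜ)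
    (hF : ∀ a b, a ≠ b → F a b = planeWaveMul lam₁ lam₂ g a b) (hx : x₁ ≠ x₂) :
    -(deriv (deriv (fun s => F s x₂)) x₁) - deriv (deriv (fun s => F x₁ s)) x₂
        + (2 * c / (x₁ - x₂) ^ 2) * F x₁ x₂
      = -(lam₁ ^ 2 + lam₂ ^ 2) * F x₁ x₂
        - 2 * exp (lam₁ * x₁ + lam₂ * x₂) * relativeOp (lam₁ - lam₂) c g (x₁ - x₂) := by
  have hz : x₁ - x₂ ∈ ({0}ᶜ : Set ℂ) := sub_ne_zero.mpr hx
  rw [(eventuallyEq_fst_of_offDiag hF hx).deriv.deriv_eq,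
    (eventuallyEq_snd_of_offDiag hF hx).deriv.deriv_eq,
    deriv_deriv_planeWaveMul_fst isOpen_compl_singleton hg hz,
    deriv_deriv_planeWaveMul_snd isOpen_compl_singleton hg hz, hF _ _ hx]
  simp only [planeWaveMul, relativeOp]
  ring

theorem schroedinger_eq_Psi2_general (m : ℕ) (lam₁ lam₂ : ℂ)
    (x₁ x₂ : ℂ) (hx : x₁ ≠ x₂) :
    -(deriv (deriv (fun s => Psi2 m lam₁ lam₂ s x₂)) x₁)
      - deriv (deriv (fun s => Psi2 m lam₁ lam₂ x₁ s)) x₂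
      + (2 * (m : ℂ) * ((m : ℂ) + 1) / (x₁ - x₂) ^ 2) * Psi2 m lam₁ lam₂ x₁ x₂
    = -(lam₁ ^ 2 + lam₂ ^ 2) * Psi2 m lam₁ lam₂ x₁ x₂ := by
  set C := (lam₁ - lam₂) ^ (-(m : ℤ))
  set g := fun z => C * BAprofile (lam₁ - lam₂) m z
  have hg : DifferentiableOn ℂ g {0}ᶜ := (differentiableOn_BAprofile _ m).const_mul C
  have hPsi : ∀ a b, a ≠ b → Psi2 m lam₁ lam₂ a b = planeWaveMul lam₁ lam₂ g a b := by
    intro a b hab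
    rw [Psi2, BAfac_eq_planeWaveMul lam₁ lam₂ m hab]
    simp only [planeWaveMul, g]
    ring
  have hode : relativeOp (lam₁ - lam₂) (m * (m + 1)) g (x₁ - x₂) = 0 := by
    have h := relativeOp_BAprofile (lam₁ - lam₂) m (sub_ne_zero.mpr hx)
    simp only [relativeOp, g, deriv_const_mul_field'] at h ⊢
    linear_combination C * h
  rw [mul_assoc 2, schroedinger_of_eq_planeWaveMul _ hg hPsi hx, hode, mul_zero, sub_zero]

theorem schroedinger_eq_Psi2 (m : ℕ) (lam₁ lam₂ : ℂ) (hl : lam₁ ≠ lam₂)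
    (x₁ x₂ : ℂ) (hx : x₁ ≠ x₂) :
    -(deriv (deriv (fun s => Psi2 m lam₁ lam₂ s x₂)) x₁)
      - deriv (deriv (fun s => Psi2 m lam₁ lam₂ x₁ s)) x₂
      + (2 * (m : ℂ) * ((m : ℂ) + 1) / (x₁ - x₂) ^ 2) * Psi2 m lam₁ lam₂ x₁ x₂
    = -(lam₁ ^ 2 + lam₂ ^ 2) * Psi2 m lam₁ lam₂ x₁ x₂ :=
  schroedinger_eq_Psi2_general m lam₁ lam₂ x₁ x₂ hx
end

section
/- For any positive integer m and complex numbers x₁ ≠ x₂, λ₁, λ₂ with Re(λ₁−λ₂) < 0, the integral ∫_{x₁}^{∞} (z−x₁)^m (z−x₂)^m e^{(λ₁−λ₂)z} dz (taken along the ray z = x₁ + t, t ∈ [0,∞)) converges, and (λ₂−λ₁)^{m+1}/(m!·(x₁−x₂)^m) · e^{λ₂(x₁+x₂)} · ∫_{x₁}^{∞} (z−x₁)^m(z−x₂)^m e^{(λ₁−λ₂)z} dz equals the Baker–Akhiezer function Ψ^{(2)}_m(x,λ) = (λ₁−λ₂)^{−m}·∏_{k=1}^{m}(D − 2k/(x₁−x₂))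 applied to exp(λ₁x₁+λ₂x₂), where D = ∂/∂x₁ − ∂/∂x₂ and the factors are ordered with k decreasing from m to 1. -/
open Complex

section helpers
open MeasureTheory Set Filter Finset Real


lemma integrable_aux (n : ℕ) {μ : ℂ} (h : μ.re < 0) :
    IntegrableOn (fun t : ℝ => (t:ℂ)^n * Complex.exp (μ * t)) (Set.Ioi 0) := by
  have hb : (0:ℝ) < -μ.re := by linarith
  have hg : IntegrableOn (fun t : ℝ => t ^ n * Real.exp (μ.re * t)) (Set.Ioi 0) := by
    have := integrableOn_rpow_mul_exp_neg_mul_rpow (p := 1) (s := n)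
      (by exact_mod_cast neg_one_lt_zero.trans_le (Nat.cast_nonneg n)) zero_lt_one hb
    refine this.congr_fun (fun t ht => ?_) measurableSet_Ioi
    rw [Set.mem_Ioi] at ht
    beta_reduce
    rw [Real.rpow_one, Real.rpow_natCast]
    ring_nf
  refine (hg.mono' ?_ ?_)
  · exact (Continuous.aestronglyMeasurable (by continuity)).restrict
  · filter_upwards [ae_restrict_mem measurableSet_Ioi] with t ht
    rw [Set.mem_Ioi] at ht
    rw [norm_mul, norm_pow, Complex.norm_real, Real.norm_of_nonneg ht.le]
    have : ‖Complex.exp (μ * t)‖ = Real.exp (μ.re * t) := by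
      rw [Complex.norm_exp]
      congr 1
      simp [Complex.mul_re]
    rw [this]


-- tendsto helper: t^n * exp(μ t) → 0
lemma tendsto_aux (n : ℕ) {μ : ℂ} (h : μ.re < 0) :
    Tendsto (fun t : ℝ => (t:ℂ)^n * Complex.exp (μ * t)) atTop (nhds 0) := by
  have hb : (0:ℝ) < -μ.re := by linarith
  rw [tendsto_zero_iff_norm_tendsto_zero]
  have key : Tendsto (fun t : ℝ => t ^ (n:ℝ) * Real.exp (-(-μ.re) * t)) atTop (nhds 0) :=
    tendsto_rpow_mul_exp_neg_mul_atTop_nhds_zero n (-μ.re) hb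
  refine key.congr' ?_
  filter_upwards [eventually_gt_atTop (0:ℝ)] with t ht
  rw [Real.rpow_natCast, neg_neg]
  rw [norm_mul, norm_pow, Complex.norm_real, Real.norm_of_nonneg ht.le,
    Complex.norm_exp]
  congr 2
  simp [Complex.mul_re]



lemma integral_aux (n : ℕ) {μ : ℂ} (h : μ.re < 0) :
    ∫ t in Set.Ioi (0:ℝ), (t:ℂ)^n * Complex.exp (μ * t) = n.factorial / (-μ)^(n+1) := by
  have hμ : μ ≠ 0 := fun e => by simp [e] at h
  have hne : (-μ) ≠ 0 := neg_ne_zero.mpr hμ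
  induction n with
  | zero =>
      have hder : ∀ t : ℝ, t ∈ Set.Ici (0:ℝ) →
          HasDerivAt (fun t : ℝ => Complex.exp (μ * t) / μ)
            ((t:ℂ)^0 * Complex.exp (μ * t)) t := by
        intro t _
        have h2 := (((hasDerivAt_id ((t:ℝ):ℂ)).const_mul μ).cexp.div_const μ).comp_ofReal
        simpa [mul_comm, mul_div_assoc, mul_div_cancel_left₀ _ hμ] using h2
      have hlim : Tendsto (fun t : ℝ => Complex.exp (μ * t) / μ) atTop (nhds (0:ℂ)) := by
        have := (tendsto_aux 0 h).div_const μ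
        simpa using this
      have := integral_Ioi_of_hasDerivAt_of_tendsto' hder (integrable_aux 0 h) hlim
      rw [this]
      simp [div_eq_mul_inv, neg_inv, -inv_neg]
  | succ n ih =>
      have hder : ∀ t : ℝ, t ∈ Set.Ici (0:ℝ) →
          HasDerivAt (fun t : ℝ => (t:ℂ)^(n+1) * Complex.exp (μ * t))
            (((n:ℂ)+1) * ((t:ℂ)^n * Complex.exp (μ * t))
              + μ * ((t:ℂ)^(n+1) * Complex.exp (μ * t))) t := by
        intro t _
        have hp : HasDerivAt (fun z : ℂ => z^(n+1) * Complex.exp (μ * z))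
            ((((n:ℂ)+1) * (t:ℂ)^n) * Complex.exp (μ * (t:ℂ))
              + (t:ℂ)^(n+1) * (μ * Complex.exp (μ * (t:ℂ)))) ((t:ℝ):ℂ) := by
          have hpow : HasDerivAt (fun z : ℂ => z^(n+1)) (((n:ℂ)+1) * (t:ℂ)^n) ((t:ℝ):ℂ) := by
            simpa using hasDerivAt_pow (n+1) ((t:ℝ):ℂ)
          exact hpow.mul
            (by simpa [mul_comm] using ((hasDerivAt_id ((t:ℝ):ℂ)).const_mul μ).cexp)
        have := hp.comp_ofReal
        convert this using 1
        push_cast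
        ring
      have hint : IntegrableOn (fun t : ℝ =>
          ((n:ℂ)+1) * ((t:ℂ)^n * Complex.exp (μ * t))
            + μ * ((t:ℂ)^(n+1) * Complex.exp (μ * t))) (Set.Ioi 0) :=
        ((integrable_aux n h).const_mul _).add ((integrable_aux (n+1) h).const_mul _)
      have key := integral_Ioi_of_hasDerivAt_of_tendsto' hder hint (tendsto_aux (n+1) h)
      rw [integral_add ((integrable_aux n h).const_mul _) ((integrable_aux (n+1) h).const_mul _),
        integral_const_mul, integral_const_mul, ih] at key
      simp only [Complex.ofReal_zero, zero_pow (Nat.succ_ne_zero n), zero_mul, sub_zero] at key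
      have hI : ∫ t in Set.Ioi (0:ℝ), (t:ℂ)^(n+1) * Complex.exp (μ * t)
          = -(((n:ℂ)+1) * ((n.factorial:ℂ) / (-μ)^(n+1))) / μ := by
        field_simp at key ⊢
        linear_combination key
      rw [hI, Nat.factorial_succ]
      push_cast
      field_simp
      ring


noncomputable def cf (k j : ℕ) : ℂ :=
  (-1)^j * (k.choose j : ℂ) * ((k+j).factorial : ℂ) / (k.factorial : ℂ)

lemma cf_zero (k : ℕ) : cf k 0 = 1 := by
  simp [cf, div_self (by exact_mod_cast Nat.factorial_ne_zero k : ((k.factorial : ℂ)) ≠ 0)]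

lemma cf_rec (k j : ℕ) :
    cf (k+1) (j+1) = cf k (j+1) - 2*((k:ℂ)+(j:ℂ)+1) * cf k j := by
  rcases lt_or_ge k j with hkj | hkj
  · have h1 : k.choose j = 0 := Nat.choose_eq_zero_of_lt hkj
    have h2 : k.choose (j+1) = 0 := Nat.choose_eq_zero_of_lt (hkj.trans (Nat.lt_succ_self j))
    have h3 : (k+1).choose (j+1) = 0 := Nat.choose_eq_zero_of_lt (by omega)
    simp [cf, h1, h2, h3]
  · have hF : ((k.factorial : ℂ)) ≠ 0 := by exact_mod_cast Nat.factorial_ne_zero k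
    have hk1 : ((k:ℂ)+1) ≠ 0 := by
      have : ((k+1 : ℕ) : ℂ) ≠ 0 := Nat.cast_ne_zero.mpr (Nat.succ_ne_zero k)
      push_cast at this; exact this
    set p : ℂ := (k.choose j : ℂ) with hp
    set q : ℂ := (k.choose (j+1) : ℂ) with hq
    have hE : q * ((j:ℂ)+1) = p * ((k:ℂ) - (j:ℂ)) := by
      have h' := congrArg (Nat.cast : ℕ → ℂ) (Nat.choose_succ_right_eq k j)
      push_cast [Nat.cast_sub hkj] at h'
      exact h'
    have key : (p+q)*((k:ℂ)+(j:ℂ)+2) = ((k:ℂ)+1)*(q + 2*p) := by linear_combination hE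
    have hP : (((k+1).choose (j+1) : ℕ) : ℂ) = p + q := by
      rw [Nat.choose_succ_succ]; push_cast; ring
    have hf1 : (((k+1+(j+1)).factorial : ℕ) : ℂ)
        = ((k:ℂ)+(j:ℂ)+2)*(((k:ℂ)+(j:ℂ)+1)*((k+j).factorial : ℂ)) := by
      have : k+1+(j+1) = (k+j+1)+1 := by omega
      rw [this, Nat.factorial_succ, Nat.factorial_succ]; push_cast; ring
    have hf2 : (((k+(j+1)).factorial : ℕ) : ℂ) = ((k:ℂ)+(j:ℂ)+1)*((k+j).factorial : ℂ) := by
      have : k+(j+1) = (k+j)+1 := by omega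
      rw [this, Nat.factorial_succ]; push_cast; ring
    have hf3 : (((k+1).factorial : ℕ) : ℂ) = ((k:ℂ)+1)*(k.factorial : ℂ) := by
      rw [Nat.factorial_succ]; push_cast; ring
    rw [cf, cf, cf, hP, hf1, hf2, hf3, ← hp, ← hq]
    field_simp
    linear_combination ((-1:ℂ)^(j+1) * ((k:ℂ)+(j:ℂ)+1) * ((k+j).factorial : ℂ)) * key

lemma cf_eq_zero {k j : ℕ} (h : k < j) : cf k j = 0 := by
  simp [cf, Nat.choose_eq_zero_of_lt h]

noncomputable def Sf (μ : ℂ) (k : ℕ) (u : ℂ) : ℂ :=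
  ∑ j ∈ range (k+1), cf k j * μ^(k-j) * u^(-(j:ℤ))

noncomputable def Sf' (μ : ℂ) (k : ℕ) (u : ℂ) : ℂ :=
  ∑ j ∈ range (k+1), cf k j * μ^(k-j) * ((-(j:ℤ)) * u^(-(j:ℤ)-1))

lemma hasDerivAt_Sf (μ : ℂ) (k : ℕ) {u : ℂ} (hu : u ≠ 0) :
    HasDerivAt (Sf μ k) (Sf' μ k u) u := by
  apply HasDerivAt.fun_sum
  intro j _
  have h := (hasDerivAt_zpow (-(j:ℤ)) u (Or.inl hu)).const_mul (cf k j * μ^(k-j))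
  exact h.congr_deriv (by push_cast; ring)

lemma Sf_rec (μ : ℂ) (k : ℕ) {u : ℂ} (hu : u ≠ 0) :
    μ * Sf μ k u + 2 * Sf' μ k u - 2*((k:ℂ)+1)/u * Sf μ k u = Sf μ (k+1) u := by
  set f : ℕ → ℂ := fun j => cf k (j+1) * μ^(k-j) * u^(-(j:ℤ)-1) with hf
  set g : ℕ → ℂ := fun j => (2*((k:ℂ)+(j:ℂ)+1)) * cf k j * μ^(k-j) * u^(-(j:ℤ)-1) with hg
  have hA : Sf μ (k+1) u = μ^(k+1) + ∑ j ∈ range (k+1), (f j - g j) := by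
    rw [Sf]
    rw [Finset.sum_range_succ'
      (fun j => cf (k+1) j * μ^(k+1-j) * u^(-(j:ℤ))) (k+1), add_comm]
    congr 1
    · simp [cf_zero]
    · apply Finset.sum_congr rfl
      intro j _
      rw [cf_rec]
      have he : (k+1) - (j+1) = k - j := Nat.succ_sub_succ k j
      have he2 : (-(((j+1):ℕ):ℤ)) = -(j:ℤ)-1 := by push_cast; ring
      simp only [he, he2, hf, hg]
      ring
  have hB1 : μ * Sf μ k u = μ^(k+1) + ∑ j ∈ range (k+1), f j := by
    rw [Sf, Finset.mul_sum]
    rw [Finset.sum_range_succ'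
      (fun j => μ * (cf k j * μ^(k-j) * u^(-(j:ℤ)))) k, add_comm]
    rw [Finset.sum_range_succ (f := f), hf]
    beta_reduce
    have hfk : cf k (k+1) * μ^(k-k) * u^(-(k:ℤ)-1) = 0 := by
      simp [cf_eq_zero (Nat.lt_succ_self k)]
    rw [hfk, add_zero]
    congr 1
    · simp [cf_zero, pow_succ]; ring
    · apply Finset.sum_congr rfl
      intro j hj
      rw [Finset.mem_range] at hj
      have he : k - j = (k - (j+1)) + 1 := by omega
      have he2 : (-(((j+1):ℕ):ℤ)) = -(j:ℤ)-1 := by push_cast; ring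
      simp only [he, he2, pow_succ]
      ring
  have hB2 : 2 * Sf' μ k u - 2*((k:ℂ)+1)/u * Sf μ k u = -∑ j ∈ range (k+1), g j := by
    rw [Sf, Sf', Finset.mul_sum, Finset.mul_sum, ← Finset.sum_sub_distrib, ← Finset.sum_neg_distrib]
    apply Finset.sum_congr rfl
    intro j _
    have hz : u^(-(j:ℤ)-1) = u^(-(j:ℤ)) * u⁻¹ := by
      rw [zpow_sub_one₀ hu]
    simp only [hg, hz]
    push_cast
    field_simp
    ring
  rw [hA, Finset.sum_sub_distrib]
  linear_combination hB1 + hB2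

lemma BAfac_eq (lam₁ lam₂ : ℂ) (k : ℕ) :
    ∀ x₁ x₂ : ℂ, x₁ ≠ x₂ →
      BAfac lam₁ lam₂ k x₁ x₂
        = Sf (lam₁ - lam₂) k (x₁ - x₂) * Complex.exp (lam₁*x₁ + lam₂*x₂) := by
  induction k with
  | zero =>
      intro x₁ x₂ hx
      simp [BAfac, Sf, cf_zero]
  | succ k ih =>
      intro x₁ x₂ hx
      have hu : x₁ - x₂ ≠ 0 := sub_ne_zero.mpr hx
      have hd1 : deriv (fun s => BAfac lam₁ lam₂ k s x₂) x₁
          = Sf' (lam₁-lam₂) k (x₁-x₂) * Complex.exp (lam₁*x₁+lam₂*x₂)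
            + Sf (lam₁-lam₂) k (x₁-x₂) * (lam₁ * Complex.exp (lam₁*x₁+lam₂*x₂)) := by
        have hev : (fun s => BAfac lam₁ lam₂ k s x₂)
            =ᶠ[nhds x₁] (fun s => Sf (lam₁-lam₂) k (s - x₂) * Complex.exp (lam₁*s + lam₂*x₂)) := by
          filter_upwards [isOpen_ne.mem_nhds hx] with s hs
          exact ih s x₂ hs
        rw [hev.deriv_eq]
        have h1 : HasDerivAt (fun s : ℂ => Sf (lam₁-lam₂) k (s - x₂))
            (Sf' (lam₁-lam₂) k (x₁-x₂)) x₁ := by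
          have h0 := (hasDerivAt_Sf (lam₁-lam₂) k hu).comp x₁
            ((hasDerivAt_id x₁).sub_const x₂)
          exact h0.congr_deriv (mul_one _)
        have h2 : HasDerivAt (fun s : ℂ => Complex.exp (lam₁*s + lam₂*x₂))
            (lam₁ * Complex.exp (lam₁*x₁ + lam₂*x₂)) x₁ := by
          have h0 := (((hasDerivAt_id x₁).const_mul lam₁).add_const (lam₂*x₂)).cexp
          simpa [mul_comm] using h0
        exact (h1.mul h2).deriv
      have hd2 : deriv (fun s => BAfac lam₁ lam₂ k x₁ s) x₂
          = -Sf' (lam₁-lam₂) k (x₁-x₂) * Complex.exp (lam₁*x₁+lam₂*x₂)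
            + Sf (lam₁-lam₂) k (x₁-x₂) * (lam₂ * Complex.exp (lam₁*x₁+lam₂*x₂)) := by
        have hev : (fun s => BAfac lam₁ lam₂ k x₁ s)
            =ᶠ[nhds x₂] (fun s => Sf (lam₁-lam₂) k (x₁ - s) * Complex.exp (lam₁*x₁ + lam₂*s)) := by
          filter_upwards [isOpen_ne.mem_nhds hx.symm] with s hs
          exact ih x₁ s (Ne.symm hs)
        rw [hev.deriv_eq]
        have h1 : HasDerivAt (fun s : ℂ => Sf (lam₁-lam₂) k (x₁ - s))
            (-Sf' (lam₁-lam₂) k (x₁-x₂)) x₂ := by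
          have h0 := (hasDerivAt_Sf (lam₁-lam₂) k hu).comp x₂
            ((hasDerivAt_const x₂ x₁).sub (hasDerivAt_id x₂))
          exact h0.congr_deriv (by ring)
        have h2 : HasDerivAt (fun s : ℂ => Complex.exp (lam₁*x₁ + lam₂*s))
            (lam₂ * Complex.exp (lam₁*x₁ + lam₂*x₂)) x₂ := by
          have h0 := (((hasDerivAt_id x₂).const_mul lam₂).const_add (lam₁*x₁)).cexp
          simpa [mul_comm] using h0
        exact (h1.mul h2).deriv
      show Dop (BAfac lam₁ lam₂ k) x₁ x₂
          - (2 * ((k : ℂ) + 1) / (x₁ - x₂)) * BAfac lam₁ lam₂ k x₁ x₂ = _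
      rw [Dop, hd1, hd2, ih x₁ x₂ hx]
      linear_combination Complex.exp (lam₁*x₁+lam₂*x₂) * Sf_rec (lam₁-lam₂) k hu

lemma term_id (ν a e₁ e₂ g f c : ℂ) (m j : ℕ) (hν : ν ≠ 0) (ha : a ≠ 0) (hf : f ≠ 0) :
    ν^(m+1) / (f * a^m) * e₁ * (c * (a^m / a^j) * e₂ * (g / (ν^(m+1) * ν^j)))
      = ((-ν)^m)⁻¹ * (((-1)^j * c * g / f) * ((-ν)^m / (-ν)^j) * (a^j)⁻¹) * (e₁ * e₂) := by
  rcases Nat.even_or_odd m with hm | hm <;> rcases Nat.even_or_odd j with hj | hj <;>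
  · simp only [hm.neg_pow, hj.neg_pow, one_pow, inv_eq_one_div, div_mul_eq_mul_div,
      mul_div_assoc', div_div, one_mul, mul_one]
    rw [div_eq_div_iff (by apply_rules [mul_ne_zero, pow_ne_zero, neg_ne_zero.mpr])
      (by apply_rules [mul_ne_zero, pow_ne_zero, neg_ne_zero.mpr])]
    ring


end helpers

set_option maxHeartbeats 1000000 in
open MeasureTheory in
theorem selberg_integral_Psi2 (m : ℕ) (hm : 0 < m) (x₁ x₂ lam₁ lam₂ : ℂ)
    (hx : x₁ ≠ x₂) (hre : (lam₁ - lam₂).re < 0) :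
    IntegrableOn
      (fun t : ℝ => ((x₁ + t) - x₁) ^ m * ((x₁ + t) - x₂) ^ m
          * Complex.exp ((lam₁ - lam₂) * (x₁ + t))) (Set.Ioi 0)
    ∧ (lam₂ - lam₁) ^ (m + 1) / ((m.factorial : ℂ) * (x₁ - x₂) ^ m)
        * Complex.exp (lam₂ * (x₁ + x₂))
        * (∫ t in Set.Ioi (0 : ℝ),
            ((x₁ + t) - x₁) ^ m * ((x₁ + t) - x₂) ^ m
              * Complex.exp ((lam₁ - lam₂) * (x₁ + t)))
      = Psi2 m lam₁ lam₂ x₁ x₂ := by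
  classical
  set μ : ℂ := lam₁ - lam₂ with hμdef
  have hμ : μ ≠ 0 := fun e => by rw [e] at hre; simp at hre
  have ha : x₁ - x₂ ≠ 0 := sub_ne_zero.mpr hx
  have hfac : ((m.factorial : ℂ)) ≠ 0 := by exact_mod_cast Nat.factorial_ne_zero m
  set a : ℂ := x₁ - x₂ with hadef
  set F : ℕ → ℝ → ℂ := fun j t =>
    ((m.choose j : ℂ) * a^(m-j) * Complex.exp (μ*x₁)) * ((t:ℂ)^(m+j) * Complex.exp (μ*t))
    with hF
  have hpt : ∀ t : ℝ, ((x₁ + t) - x₁) ^ m * ((x₁ + t) - x₂) ^ m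
      * Complex.exp (μ * (x₁ + t)) = ∑ j ∈ Finset.range (m+1), F j t := by
    intro t
    have e1 : ((x₁ + (t:ℂ)) - x₁) = (t:ℂ) := by ring
    have e2 : ((x₁ + (t:ℂ)) - x₂) = (t:ℂ) + a := by rw [hadef]; ring
    have e3 : Complex.exp (μ * (x₁ + (t:ℂ)))
        = Complex.exp (μ*x₁) * Complex.exp (μ*(t:ℂ)) := by
      rw [← Complex.exp_add]; ring_nf
    rw [e1, e2, e3, add_pow, Finset.mul_sum, Finset.sum_mul]
    apply Finset.sum_congr rfl
    intro j _
    rw [hF]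
    ring
  have hint : ∀ j ∈ Finset.range (m+1), IntegrableOn (F j) (Set.Ioi 0) := fun j _ =>
    (integrable_aux (m+j) hre).const_mul _
  have hIof : IntegrableOn
      (fun t : ℝ => ((x₁ + t) - x₁) ^ m * ((x₁ + t) - x₂) ^ m
          * Complex.exp (μ * (x₁ + t))) (Set.Ioi 0) := by
    have heq : (fun t : ℝ => ((x₁ + t) - x₁) ^ m * ((x₁ + t) - x₂) ^ m
        * Complex.exp (μ * (x₁ + t))) = fun t => ∑ j ∈ Finset.range (m+1), F j t :=
      funext hpt
    rw [heq]
    exact integrable_finset_sum _ hint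
  refine ⟨hIof, ?_⟩
  have hIeq : (∫ t in Set.Ioi (0:ℝ), ((x₁ + t) - x₁) ^ m * ((x₁ + t) - x₂) ^ m
      * Complex.exp (μ * (x₁ + t)))
      = ∑ j ∈ Finset.range (m+1),
          ((m.choose j : ℂ) * a^(m-j) * Complex.exp (μ*x₁))
            * (((m+j).factorial : ℂ) / (-μ)^(m+j+1)) := by
    rw [funext hpt, integral_finset_sum _ hint]
    apply Finset.sum_congr rfl
    intro j _
    rw [hF]
    rw [MeasureTheory.integral_const_mul, integral_aux (m+j) hre]
  rw [hIeq, Psi2, BAfac_eq lam₁ lam₂ m x₁ x₂ hx, ← hμdef, ← hadef, Sf]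
  rw [Finset.sum_mul, Finset.mul_sum, Finset.mul_sum]
  apply Finset.sum_congr rfl
  intro j hj
  rw [Finset.mem_range] at hj
  have hjm : j ≤ m := Nat.lt_succ_iff.mp hj
  have hν' : lam₂ - lam₁ ≠ 0 := sub_ne_zero.mpr (Ne.symm (sub_ne_zero.mp hμ))
  have hE : Complex.exp (lam₂*(x₁+x₂)) * Complex.exp (μ*x₁)
      = Complex.exp (lam₁*x₁ + lam₂*x₂) := by
    rw [← Complex.exp_add]; congr 1; rw [hμdef]; ring
  rw [cf, ← hE]
  have hap : a^(m-j) = a^m / a^j := pow_sub₀ a ha hjm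
  have hmp : μ^(m-j) = μ^m / μ^j := pow_sub₀ μ hμ hjm
  have hzm : μ ^ (-(m:ℤ)) = (μ^m)⁻¹ := by rw [zpow_neg, zpow_natCast]
  have hzj : a ^ (-(j:ℤ)) = (a^j)⁻¹ := by rw [zpow_neg, zpow_natCast]
  have hsplit : (-μ)^(m+j+1) = (lam₂ - lam₁)^(m+1) * (lam₂-lam₁)^j := by
    rw [show -μ = lam₂ - lam₁ from by rw [hμdef]; ring, ← pow_add]
    congr 1
    omega
  have hμν : μ = -(lam₂ - lam₁) := by rw [hμdef]; ring
  rw [hap, hmp, hzm, hzj, hsplit, hμν]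
  linear_combination term_id (lam₂-lam₁) a (Complex.exp (lam₂*(x₁+x₂)))
    (Complex.exp (-(lam₂-lam₁)*x₁)) (((m+j).factorial : ℂ)) ((m.factorial : ℂ))
    ((m.choose j : ℂ)) m j hν' ha hfac
end

section
/- For any positive integer m and complex numbers x₁ ≠ x₂, λ₁, λ₂ with λ₁ ≠ λ₂, the quantity m!·(x₁−x₂)^{m+1}/(λ₁−λ₂)^m · e^{λ₂(x₁+x₂)} · Res_{z=x₁} [ e^{(λ₁−λ₂)z} / ((z−x₁)^{m+1}(z−x₂)^{m+1}) ] equals the Baker–Akhiezer function Ψ^{(2)}_m(x,λ) = (λ₁−λ₂)^{−m}·∏_{k=m}^{1}(D − 2k/(x₁−x₂)) exp(λ₁x₁+λ₂x₂), where D = ∂/∂x₁ − ∂/∂x₂. -/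
/-
With `μ = λ₁ - λ₂`, Cauchy's formula turns the residue into
`(1/m!) dᵐ/dzᵐ [(z - x₂)^(-m-1) e^{μz}]` at `z = x₁`, and the Leibniz rule evaluates this as
`e^{μx₁} (x₁ - x₂)^(-m-1) ∑ᵢ (-1)^i C(m,i) (m+1)⋯(m+i) μ^(m-i) (x₁ - x₂)^(-i)`.
On the other side, `D` acts on `e^{λ₁x₁+λ₂x₂} g(x₁ - x₂)` as `μ + 2 d/dt` on `g`, so the factors
applied to the exponential produce `e^{λ₁x₁+λ₂x₂}` times a polynomial in `(x₁ - x₂)⁻¹` given by a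
recursion; solving that recursion coefficientwise gives the same coefficients `(m+i)!/(i!(m-i)!)`.
-/

open Complex

open Filter Topology Polynomial
open scoped Nat

-- `baCoeff k i = (k + i)! / (i! (k - i)!)`, and `0` for `i > k`.
def baCoeff (k i : ℕ) : ℕ := k.choose i * (k + 1).ascFactorial i

lemma baCoeff_zero_right (k : ℕ) : baCoeff k 0 = 1 := by simp [baCoeff]

lemma baCoeff_of_lt {k i : ℕ} (h : k < i) : baCoeff k i = 0 := by
  simp [baCoeff, Nat.choose_eq_zero_of_lt h]

lemma baCoeff_succ_succ (k i : ℕ) :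
    baCoeff (k + 1) (i + 1) = baCoeff k (i + 1) + 2 * (k + i + 1) * baCoeff k i := by
  have hasc : ((k + 1) * (k + 1 + 1).ascFactorial (i + 1) : ℚ)
      = (k + 1 + (i + 1)) * (k + 1).ascFactorial (i + 1) := by
    exact_mod_cast Nat.succ_ascFactorial (k + 1) (i + 1)
  have hasc' : ((k + 1).ascFactorial (i + 1) : ℚ) = (k + 1 + i) * (k + 1).ascFactorial i := by
    exact_mod_cast Nat.ascFactorial_succ
  have hchoose : ((k + 1) * k.choose i : ℚ) = (k + 1).choose (i + 1) * (i + 1) := by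
    exact_mod_cast Nat.add_one_mul_choose_eq k i
  have hpascal : ((k + 1).choose (i + 1) : ℚ) = k.choose i + k.choose (i + 1) := by
    exact_mod_cast Nat.choose_succ_succ' k i
  -- After multiplying by `k + 1` this is Pascal's rule together with
  -- `(k + 1) C(k, i) = (i + 1) C(k + 1, i + 1)`.
  apply Nat.cast_injective (R := ℚ)
  apply mul_left_cancel₀ (show (k + 1 : ℚ) ≠ 0 by positivity)
  simp only [baCoeff]
  push_cast
  linear_combination ((k + 1).choose (i + 1) : ℚ) * hasc
    + (((k + 1).choose (i + 1) : ℚ) * (k + i + 2) - (k + 1) * k.choose (i + 1)) * hasc'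
    + (k + i + 1) * ((k + 1).ascFactorial i : ℚ) * (k + 1) * hpascal
    - (k + i + 1) * ((k + 1).ascFactorial i : ℚ) * hchoose

section BakerAkhiezerPolynomial

variable {R : Type*} [CommRing R]

/- `BAfac k = e^{λ₁x₁+λ₂x₂} · (baPoly (λ₁ - λ₂) k).eval (x₁ - x₂)⁻¹`. The recursion is that of
`BAfac`, because `D (e^{λ₁x₁+λ₂x₂} g(x₁ - x₂)) = e^{λ₁x₁+λ₂x₂} ((λ₁ - λ₂) g + 2 g')` and
`d/dt = -T² d/dT` for `T = t⁻¹`. -/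
noncomputable def baPoly (μ : R) : ℕ → R[X]
  | 0 => 1
  | k + 1 => C μ * baPoly μ k - 2 * X ^ 2 * derivative (baPoly μ k)
      - C (2 * ((k : R) + 1)) * X * baPoly μ k

lemma coeff_two_mul_X_sq_mul_derivative (p : R[X]) (i : ℕ) :
    (2 * X ^ 2 * derivative p).coeff (i + 1) = 2 * i * p.coeff i := by
  rcases i with _ | i
  · simp [mul_assoc, coeff_X_pow_mul']
  · simp [mul_assoc, coeff_X_pow_mul', coeff_derivative]
    ring

lemma baCoeff_mul_pow_sub_succ (μ : R) (k i : ℕ) :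
    (baCoeff k (i + 1) : R) * (μ * μ ^ (k - (i + 1))) = baCoeff k (i + 1) * μ ^ (k - i) := by
  rcases lt_or_ge i k with h | h
  · rw [← pow_succ', show k - (i + 1) + 1 = k - i by omega]
  · simp [baCoeff_of_lt (Nat.lt_succ_of_le h)]

lemma coeff_baPoly (μ : R) (k i : ℕ) :
    (baPoly μ k).coeff i = (-1) ^ i * baCoeff k i * μ ^ (k - i) := by
  induction k generalizing i with
  | zero => rcases i with _ | i <;> simp [baPoly, baCoeff_zero_right, baCoeff_of_lt, coeff_one]
  | succ k ih =>
    rcases i with _ | i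
    · simp [baPoly, ih, baCoeff_zero_right, pow_succ']
    rw [baPoly, coeff_sub, coeff_sub, coeff_two_mul_X_sq_mul_derivative, coeff_C_mul,
      mul_assoc (C _), coeff_C_mul, coeff_X_mul, ih, ih, baCoeff_succ_succ, Nat.add_sub_add_right]
    push_cast
    linear_combination (-1) ^ (i + 1) * baCoeff_mul_pow_sub_succ μ k i

lemma natDegree_baPoly_le (μ : R) (k : ℕ) : (baPoly μ k).natDegree ≤ k :=
  natDegree_le_iff_coeff_eq_zero.2 fun i hi => by simp [coeff_baPoly, baCoeff_of_lt hi]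

lemma eval_baPoly (μ T : R) (k : ℕ) :
    (baPoly μ k).eval T
      = ∑ i ∈ Finset.range (k + 1), (-1) ^ i * baCoeff k i * μ ^ (k - i) * T ^ i := by
  rw [eval_eq_sum_range' (Nat.lt_succ_of_le (natDegree_baPoly_le μ k))]
  simp [coeff_baPoly]

end BakerAkhiezerPolynomial

lemma Dop_congr {F G : ℂ → ℂ → ℂ} (h : ∀ a b, a ≠ b → F a b = G a b) {x₁ x₂ : ℂ}
    (hx : x₁ ≠ x₂) : Dop F x₁ x₂ = Dop G x₁ x₂ := by
  have h₁ : (fun s => F s x₂) =ᶠ[𝓝 x₁] fun s => G s x₂ := by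
    filter_upwards [eventually_ne_nhds hx] with s hs using h s x₂ hs
  have h₂ : (fun s => F x₁ s) =ᶠ[𝓝 x₂] fun s => G x₁ s := by
    filter_upwards [eventually_ne_nhds hx.symm] with s hs using h x₁ s hs.symm
  simp only [Dop, h₁.deriv_eq, h₂.deriv_eq]

lemma Dop_cexp_mul_comp_sub (lam₁ lam₂ : ℂ) {g : ℂ → ℂ} {x₁ x₂ : ℂ}
    (hg : DifferentiableAt ℂ g (x₁ - x₂)) :
    Dop (fun a b => exp (lam₁ * a + lam₂ * b) * g (a - b)) x₁ x₂
      = exp (lam₁ * x₁ + lam₂ * x₂)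
          * ((lam₁ - lam₂) * g (x₁ - x₂) + 2 * deriv g (x₁ - x₂)) := by
  have h₁ : HasDerivAt (fun s => exp (lam₁ * s + lam₂ * x₂) * g (s - x₂))
      (lam₁ * exp (lam₁ * x₁ + lam₂ * x₂) * g (x₁ - x₂)
        + exp (lam₁ * x₁ + lam₂ * x₂) * deriv g (x₁ - x₂)) x₁ := by
    have hexp := (((hasDerivAt_id x₁).const_mul lam₁).add_const (lam₂ * x₂)).cexp
    have hgs := hg.hasDerivAt.comp x₁ ((hasDerivAt_id x₁).sub_const x₂)
    refine (hexp.fun_mul hgs).congr_deriv ?_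
    simp only [id, Function.comp, mul_one]
    ring
  have h₂ : HasDerivAt (fun s => exp (lam₁ * x₁ + lam₂ * s) * g (x₁ - s))
      (lam₂ * exp (lam₁ * x₁ + lam₂ * x₂) * g (x₁ - x₂)
        - exp (lam₁ * x₁ + lam₂ * x₂) * deriv g (x₁ - x₂)) x₂ := by
    have hexp := (((hasDerivAt_id x₂).const_mul lam₂).const_add (lam₁ * x₁)).cexp
    have hgs := hg.hasDerivAt.comp x₂ ((hasDerivAt_id x₂).const_sub x₁)
    refine (hexp.fun_mul hgs).congr_deriv ?_
    simp only [id, Function.comp, mul_one]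
    ring
  simp only [Dop, h₁.deriv, h₂.deriv]
  ring

lemma BAfac_eq_cexp_mul_eval_baPoly (lam₁ lam₂ : ℂ) (k : ℕ) {x₁ x₂ : ℂ} (hx : x₁ ≠ x₂) :
    BAfac lam₁ lam₂ k x₁ x₂
      = exp (lam₁ * x₁ + lam₂ * x₂) * (baPoly (lam₁ - lam₂) k).eval (x₁ - x₂)⁻¹ := by
  induction k generalizing x₁ x₂ with
  | zero => simp [BAfac, baPoly]
  | succ k ih =>
    set g : ℂ → ℂ := fun t => (baPoly (lam₁ - lam₂) k).eval t⁻¹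
    have ht : x₁ - x₂ ≠ 0 := sub_ne_zero.2 hx
    have hg : HasDerivAt g ((baPoly (lam₁ - lam₂) k).derivative.eval (x₁ - x₂)⁻¹
        * -((x₁ - x₂) ^ 2)⁻¹) (x₁ - x₂) :=
      ((baPoly (lam₁ - lam₂) k).hasDerivAt _).comp _ (hasDerivAt_inv ht)
    have hD : Dop (BAfac lam₁ lam₂ k) x₁ x₂
        = Dop (fun a b => exp (lam₁ * a + lam₂ * b) * g (a - b)) x₁ x₂ :=
      Dop_congr (fun a b hab => ih hab) hx
    rw [BAfac]
    dsimp only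
    rw [hD, Dop_cexp_mul_comp_sub lam₁ lam₂ hg.differentiableAt, hg.deriv, ih hx]
    simp only [g, baPoly, eval_sub, eval_mul, eval_C, eval_X, eval_pow, eval_ofNat]
    field_simp
    ring

lemma prod_range_neg_natCast_sub {R : Type*} [CommRing R] (p j : ℕ) :
    ∏ i ∈ Finset.range j, (-(p : R) - i) = (-1) ^ j * p.ascFactorial j := by
  rw [Nat.ascFactorial_eq_prod_range, ← Finset.card_range j, ← Finset.prod_const,
    Finset.card_range, Nat.cast_prod, ← Finset.prod_mul_distrib]
  refine Finset.prod_congr rfl fun i _ => ?_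
  push_cast
  ring

lemma iteratedDeriv_sub_zpow_neg {𝕜 : Type*} [NontriviallyNormedField 𝕜] (a z : 𝕜)
    (p j : ℕ) :
    iteratedDeriv j (fun w => (w - a) ^ (-(p : ℤ))) z
      = (-1) ^ j * p.ascFactorial j * (z - a) ^ (-(p : ℤ) - j) := by
  rw [iteratedDeriv_comp_sub_const (f := fun w => w ^ (-(p : ℤ))), iteratedDeriv_eq_iterate]
  beta_reduce
  rw [iter_deriv_zpow]
  push_cast
  rw [prod_range_neg_natCast_sub]

lemma iteratedDeriv_sub_zpow_neg_mul_cexp (μ : ℂ) {a z : ℂ} (hz : z ≠ a) (p n : ℕ) :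
    iteratedDeriv n (fun w => (w - a) ^ (-(p : ℤ)) * exp (μ * w)) z
      = exp (μ * z) * (z - a) ^ (-(p : ℤ)) * ∑ i ∈ Finset.range (n + 1),
          (-1) ^ i * (n.choose i * p.ascFactorial i) * μ ^ (n - i) * ((z - a)⁻¹) ^ i := by
  have hza : z - a ≠ 0 := sub_ne_zero.2 hz
  have hpow : ContDiffAt ℂ n (fun w => (w - a) ^ (-(p : ℤ))) z := by
    simp only [zpow_neg, zpow_natCast]
    fun_prop (disch := simp [hza])
  have hexp : ContDiffAt ℂ n (fun w => exp (μ * w)) z := by fun_prop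
  rw [iteratedDeriv_fun_mul hpow hexp, Finset.mul_sum]
  refine Finset.sum_congr rfl fun i _ => ?_
  rw [iteratedDeriv_sub_zpow_neg, iteratedDeriv_cexp_const_mul, zpow_sub₀ hza, zpow_natCast,
    div_eq_mul_inv, ← inv_pow]
  ring

lemma two_pi_I_inv_mul_circleIntegral_div_sub_pow {f : ℂ → ℂ} {c : ℂ} {R : ℝ} (hR : 0 < R)
    (hf : DifferentiableOn ℂ f (Metric.closedBall c R)) (n : ℕ) :
    (2 * Real.pi * I)⁻¹ * ∮ z in C(c, R), f z / (z - c) ^ (n + 1)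
      = (n ! : ℂ)⁻¹ * iteratedDeriv n f c := by
  have h := circleIntegral_one_div_sub_center_pow_smul_of_differentiable_on_off_countable hR n
    Set.countable_empty hf.continuousOn fun z hz =>
      (hf.mono Metric.ball_subset_closedBall).differentiableAt (Metric.isOpen_ball.mem_nhds hz.1)
  simp only [smul_eq_mul, one_div, inv_mul_eq_div] at h
  rw [h]
  field_simp [two_pi_I_ne_zero]

lemma residue_eq_iteratedDeriv (μ x₁ x₂ : ℂ) (m : ℕ) {ε : ℝ} (hε : 0 < ε)
    (hε' : ε < ‖x₁ - x₂‖) :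
    (2 * Real.pi * I)⁻¹
        * ∮ z in C(x₁, ε), exp (μ * z) / ((z - x₁) ^ (m + 1) * (z - x₂) ^ (m + 1))
      = (m ! : ℂ)⁻¹
        * iteratedDeriv m (fun z => (z - x₂) ^ (-((m + 1 : ℕ) : ℤ)) * exp (μ * z)) x₁ := by
  have hne : ∀ z ∈ Metric.closedBall x₁ ε, z ≠ x₂ := by
    rintro z hz rfl
    rw [Metric.mem_closedBall, dist_eq_norm, norm_sub_rev] at hz
    linarith
  have hf : DifferentiableOn ℂ (fun z => (z - x₂) ^ (-((m + 1 : ℕ) : ℤ)) * exp (μ * z))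
      (Metric.closedBall x₁ ε) := fun z hz => by
    have hz₂ : z - x₂ ≠ 0 := sub_ne_zero.2 (hne z hz)
    simp only [zpow_neg, zpow_natCast]
    fun_prop (disch := simp [hz₂])
  rw [← two_pi_I_inv_mul_circleIntegral_div_sub_pow hε hf]
  congr 1
  refine circleIntegral.integral_congr hε.le fun z _ => ?_
  simp only [zpow_neg, zpow_natCast, div_eq_mul_inv, mul_inv]
  ring

theorem residue_formula_Psi2_general (m : ℕ) (x₁ x₂ lam₁ lam₂ : ℂ)
    (hx : x₁ ≠ x₂)
    (ε : ℝ) (hε : 0 < ε) (hε' : ε < ‖x₁ - x₂‖) :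
    (m.factorial : ℂ) * (x₁ - x₂) ^ (m + 1) / (lam₁ - lam₂) ^ m
        * Complex.exp (lam₂ * (x₁ + x₂))
        * ((2 * Real.pi * Complex.I)⁻¹ *
            ∮ z in C(x₁, ε),
              Complex.exp ((lam₁ - lam₂) * z) / ((z - x₁) ^ (m + 1) * (z - x₂) ^ (m + 1)))
      = Psi2 m lam₁ lam₂ x₁ x₂ := by
  have hexp : exp (lam₂ * (x₁ + x₂)) * exp ((lam₁ - lam₂) * x₁)
      = exp (lam₁ * x₁ + lam₂ * x₂) := by
    rw [← Complex.exp_add]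
    congr 1
    ring
  rw [residue_eq_iteratedDeriv _ _ _ m hε hε', iteratedDeriv_sub_zpow_neg_mul_cexp _ hx, Psi2,
    BAfac_eq_cexp_mul_eval_baPoly _ _ m hx, eval_baPoly, ← hexp]
  simp only [baCoeff, Nat.cast_mul, zpow_neg, zpow_natCast]
  field_simp [sub_ne_zero.2 hx, Nat.factorial_ne_zero]

theorem residue_formula_Psi2 (m : ℕ) (hm : 0 < m) (x₁ x₂ lam₁ lam₂ : ℂ)
    (hx : x₁ ≠ x₂) (hl : lam₁ ≠ lam₂)
    (ε : ℝ) (hε : 0 < ε) (hε' : ε < ‖x₁ - x₂‖) :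
    (m.factorial : ℂ) * (x₁ - x₂) ^ (m + 1) / (lam₁ - lam₂) ^ m
        * Complex.exp (lam₂ * (x₁ + x₂))
        * ((2 * Real.pi * Complex.I)⁻¹ *
            ∮ z in C(x₁, ε),
              Complex.exp ((lam₁ - lam₂) * z) / ((z - x₁) ^ (m + 1) * (z - x₂) ^ (m + 1)))
      = Psi2 m lam₁ lam₂ x₁ x₂ :=
  residue_formula_Psi2_general m x₁ x₂ lam₁ lam₂ hx ε hε hε'
end

section
/- Let N be a positive integer, β a complex parameter, m₁,…,m_N nonzero complex numbers, and set γ_{jk} = (m_j + m_k)β(m_j m_k β − 1). Then the function Φ₀(x) = ∏_{i<j} sinh(x_i − x_j)^{β m_i m_j} satisfies H Φ₀ = E₀ Φ₀, where H = −∑_{j=1}^N (1/m_j) ∂²/∂x_j² + ∑_{j<k} γ_{jk}/sinh²(x_j − x_k) and E₀ = −(β²/3)·((∑_j m_j)³ − ∑_j m_j³), on the domain where all x_i − x_j (i<j) are nonzero and a branch of the power is fixed. -/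
/-!
Along the line `s ↦ update x j s` the ground state `Φ₀` has logarithmic derivative
`L_j = β m_j ∑_k m_k coth (x_j - x_k)`, so `∂_j² Φ₀ = Φ₀ (L_j² + ∂_j L_j)`, and `∂_j L_j` is
a sum of terms `-β m_j m_k / sinh² (x_j - x_k)`; divided by `m_j` they cancel the part of `γ_jk`
linear in `β`.
The squares leave `β² ∑_j m_j (∑_k m_k coth (x_j - x_k))²`. Symmetrising this triple sum over cyclic
permutations of the indices and using, for distinct `a, b, c`, the three-term identity
`coth (a - b) coth (a - c) + coth (b - a) coth (b - c) + coth (c - a) coth (c - b) = 1`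
turns it into `((∑ m)³ - ∑ m³) / 3` plus the terms `m_j m_k (m_j + m_k) / sinh² (x_j - x_k)`,
which cancel the part of `γ_jk` quadratic in `β`.
-/

open Complex Finset Filter Topology

/-- `coth 0 = 0` by the convention `x / 0 = 0`, so in sums such as `∑ k, m k * coth (x j - x k)`
the diagonal term `k = j` vanishes. -/
noncomputable def Real.coth (r : ℝ) : ℝ := Real.cosh r / Real.sinh r

namespace Real

theorem coth_neg (r : ℝ) : coth (-r) = -coth r := by
  simp [coth, div_neg]

theorem coth_zero : coth 0 = 0 := by simp [coth]

theorem coth_sq_sub_one {r : ℝ} (hr : r ≠ 0) : coth r ^ 2 - 1 = (sinh r ^ 2)⁻¹ := by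
  have := sinh_ne_zero.2 hr
  rw [coth, div_pow]
  field_simp
  linear_combination cosh_sq_sub_sinh_sq r

theorem hasDerivAt_coth {r : ℝ} (hr : r ≠ 0) : HasDerivAt coth (-(sinh r ^ 2)⁻¹) r := by
  have := sinh_ne_zero.2 hr
  refine ((hasDerivAt_cosh r).div (hasDerivAt_sinh r) this).congr_deriv ?_
  field_simp
  linear_combination -cosh_sq_sub_sinh_sq r

theorem coth_add_mul_coth_add_coth {a b : ℝ} (ha : a ≠ 0) (hb : b ≠ 0) (hab : a + b ≠ 0) :
    coth (a + b) * (coth a + coth b) = coth a * coth b + 1 := by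
  have := sinh_ne_zero.2 ha
  have := sinh_ne_zero.2 hb
  have := sinh_ne_zero.2 hab
  simp only [coth]
  field_simp
  rw [sinh_add, cosh_add]
  ring

theorem coth_sub_mul_coth_sub_cyclic {a b c : ℝ} (hab : a ≠ b) (hbc : b ≠ c) (hac : a ≠ c) :
    coth (a - b) * coth (a - c) + coth (b - a) * coth (b - c) + coth (c - a) * coth (c - b) =
      1 := by
  have hsum : a - c = (a - b) + (b - c) := by ring
  rw [← neg_sub a b, ← neg_sub a c, ← neg_sub b c, coth_neg, coth_neg, coth_neg, hsum]
  linear_combination coth_add_mul_coth_add_coth (sub_ne_zero.2 hab) (sub_ne_zero.2 hbc)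
    (hsum ▸ sub_ne_zero.2 hac)

end Real

section LogDeriv

variable {𝕜 𝔸 : Type*} [NontriviallyNormedField 𝕜] [NormedCommRing 𝔸] [NormedAlgebra 𝕜 𝔸]

theorem HasDerivAt.finsetProd_of_logDeriv {ι : Type*} {u : Finset ι} {f : ι → 𝕜 → 𝔸}
    {ℓ : ι → 𝔸} {t : 𝕜} (hf : ∀ i ∈ u, HasDerivAt (f i) (f i t * ℓ i) t) :
    HasDerivAt (fun s => ∏ i ∈ u, f i s) ((∏ i ∈ u, f i t) * ∑ i ∈ u, ℓ i) t := by
  classical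
  convert HasDerivAt.fun_finsetProd hf using 1
  rw [mul_sum]
  refine sum_congr rfl fun i hi => ?_
  rw [smul_eq_mul, ← mul_assoc, prod_erase_mul _ _ hi]

theorem deriv_deriv_eq_of_logDeriv {f ℓ : 𝕜 → 𝔸} {ℓ' : 𝔸} {t : 𝕜}
    (hf : ∀ᶠ s in 𝓝 t, HasDerivAt f (f s * ℓ s) s) (hℓ : HasDerivAt ℓ ℓ' t) :
    deriv (deriv f) t = f t * (ℓ t ^ 2 + ℓ') := by
  have hderiv : deriv f =ᶠ[𝓝 t] fun s => f s * ℓ s := hf.mono fun s hs => hs.deriv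
  rw [hderiv.deriv_eq, (hf.self_of_nhds.fun_mul hℓ).deriv]
  ring

end LogDeriv

theorem HasDerivAt.sinh_cpow {u : ℝ → ℝ} {u' t : ℝ} (hu : HasDerivAt u u' t)
    (hpos : 0 < Real.sinh (u t)) (c : ℂ) :
    HasDerivAt (fun s => (Real.sinh (u s) : ℂ) ^ c)
      ((Real.sinh (u t) : ℂ) ^ c * (c * (Real.coth (u t) * u' : ℝ))) t := by
  have hslit : (Real.sinh (u t) : ℂ) ∈ slitPlane := ofReal_mem_slitPlane.2 hpos
  have hne : (Real.sinh (u t) : ℂ) ≠ 0 := slitPlane_ne_zero hslit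
  refine ((hasStrictDerivAt_cpow_const hslit).hasDerivAt.comp t hu.sinh.ofReal_comp).congr_deriv ?_
  rw [cpow_sub _ _ hne, cpow_one, Real.coth]
  push_cast
  field_simp

theorem cyclic_eq_ite {ι R : Type*} [DecidableEq ι] [CommRing R] {c : ι → ι → R}
    (hdiag : ∀ i, c i i = 0)
    (hcyc : ∀ i j k, i ≠ j → j ≠ k → i ≠ k → c i j * c i k + c j i * c j k + c k i * c k j = 1)
    (i j k : ι) :
    c i j * c i k + c j i * c j k + c k i * c k j =
      1 + 2 * (if i = j ∧ j = k then 1 else 0) + (if i = j then c k i ^ 2 - 1 else 0)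
        + (if j = k then c i j ^ 2 - 1 else 0) + (if i = k then c j i ^ 2 - 1 else 0) := by
  by_cases hij : i = j
  · subst hij
    by_cases hik : i = k
    · subst hik; simp [hdiag]; ring
    · simp [hik, hdiag]; ring
  by_cases hjk : j = k
  · subst hjk; simp [hij, hdiag]; ring
  by_cases hik : i = k
  · subst hik; simp [hij, hjk, hdiag]; ring
  · simp [hij, hjk, hik, hcyc i j k hij hjk hik]

section CyclicSymmetrization

variable {ι R : Type*} [Fintype ι] [CommRing R]

theorem sum_sum_sum_rotate {M : Type*} [AddCommMonoid M] (f : ι → ι → ι → M) :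
    ∑ a, ∑ b, ∑ c, f a b c = ∑ a, ∑ b, ∑ c, f b c a := by
  conv_rhs => rw [Finset.sum_comm]
  exact sum_congr rfl fun _ _ => Finset.sum_comm

theorem three_mul_sum_mul_sum_sq_eq_sum_cyclic (m : ι → R) (c : ι → ι → R) :
    3 * ∑ j, m j * (∑ k, m k * c j k) ^ 2 =
      ∑ a, ∑ b, ∑ d, m a * m b * m d * (c a b * c a d + c b a * c b d + c d a * c d b) := by
  set F : ι → ι → ι → R := fun a b d => m a * m b * m d * (c a b * c a d)
  have hS : ∑ j, m j * (∑ k, m k * c j k) ^ 2 = ∑ a, ∑ b, ∑ d, F a b d := by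
    simp_rw [F, sq, sum_mul_sum, mul_sum]
    exact sum_congr rfl fun _ _ => sum_congr rfl fun _ _ => sum_congr rfl fun _ _ => by ring
  have hrot₁ := sum_sum_sum_rotate F
  have hrot₂ := sum_sum_sum_rotate fun a b d => F b d a
  have hsplit : ∑ a, ∑ b, ∑ d, m a * m b * m d * (c a b * c a d + c b a * c b d + c d a * c d b) =
      ∑ a, ∑ b, ∑ d, F a b d + ∑ a, ∑ b, ∑ d, F b d a + ∑ a, ∑ b, ∑ d, F d a b := by
    simp only [← sum_add_distrib]
    exact sum_congr rfl fun _ _ => sum_congr rfl fun _ _ => sum_congr rfl fun _ _ => by ring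
  linear_combination 3 * hS + 2 * hrot₁ + hrot₂ - hsplit

theorem three_mul_sum_mul_sum_sq [DecidableEq ι] {c : ι → ι → R} (hdiag : ∀ i, c i i = 0)
    (hcyc : ∀ i j k, i ≠ j → j ≠ k → i ≠ k → c i j * c i k + c j i * c j k + c k i * c k j = 1)
    (m : ι → R) :
    3 * ∑ j, m j * (∑ k, m k * c j k) ^ 2 =
      (∑ j, m j) ^ 3 - ∑ j, m j ^ 3 + 3 * ∑ j, ∑ k ∈ {j}ᶜ, m j ^ 2 * m k * (c k j ^ 2 - 1) := by
  have hT := three_mul_sum_mul_sum_sq_eq_sum_cyclic m c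
  simp only [cyclic_eq_ite hdiag hcyc, mul_add, mul_ite, mul_one, mul_zero, sum_add_distrib,
    sum_ite_eq, mem_univ, if_true, ite_and, sum_ite_irrel, sum_const_zero] at hT
  have hcube : (∑ j, m j) ^ 3 = ∑ a, ∑ b, ∑ d, m a * m b * m d := by
    simp_rw [pow_three, sum_mul, mul_sum, mul_assoc]
  set B := ∑ j, ∑ k, m j ^ 2 * m k * (c k j ^ 2 - 1)
  have hB₁ : ∑ a, ∑ b, m a * m a * m b * (c b a ^ 2 - 1) = B :=
    sum_congr rfl fun _ _ => sum_congr rfl fun _ _ => by ring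
  have hB₂ : ∑ a, ∑ b, m a * m b * m b * (c a b ^ 2 - 1) = B := by
    rw [Finset.sum_comm]
    exact sum_congr rfl fun _ _ => sum_congr rfl fun _ _ => by ring
  have hB₃ : ∑ a, ∑ b, m a * m b * m a * (c b a ^ 2 - 1) = B :=
    sum_congr rfl fun _ _ => sum_congr rfl fun _ _ => by ring
  have hdiagonal : ∑ a, m a * m a * m a * 2 = 2 * ∑ j, m j ^ 3 := by
    rw [mul_sum]; exact sum_congr rfl fun _ _ => by ring
  have hB : B = -∑ j, m j ^ 3 + ∑ j, ∑ k ∈ {j}ᶜ, m j ^ 2 * m k * (c k j ^ 2 - 1) := by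
    rw [← sum_neg_distrib, ← sum_add_distrib]
    refine sum_congr rfl fun j _ => ?_
    rw [Fintype.sum_eq_add_sum_compl j, hdiag]; ring
  linear_combination hT - hcube + hB₁ + hB₂ + hB₃ + hdiagonal + 3 * hB

end CyclicSymmetrization

section SingleSums

variable {ι R : Type*} [Fintype ι] [LinearOrder ι] [LocallyFiniteOrderTop ι]

theorem sum_inv_mul_sum_sum_Ioi_mul_single_sub_single_sq [Field R] {m : ι → R}
    (hm : ∀ j, m j ≠ 0) (s : ι → ι → R) :
    ∑ j, (m j)⁻¹ * ∑ i, ∑ k ∈ Ioi i,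
        m i * m k * s i k * ((Pi.single j 1 : ι → R) i - (Pi.single j 1 : ι → R) k) ^ 2 =
      ∑ i, ∑ k ∈ Ioi i, (m i + m k) * s i k := by
  simp_rw [mul_sum]
  rw [Finset.sum_comm]
  refine sum_congr rfl fun i _ => ?_
  rw [Finset.sum_comm]
  refine sum_congr rfl fun k hk => ?_
  have hδ : ∀ j, ((Pi.single j 1 : ι → R) i - (Pi.single j 1 : ι → R) k) ^ 2 =
      (Pi.single j 1 : ι → R) i + (Pi.single j 1 : ι → R) k := fun j => by
    rcases eq_or_ne i j with rfl | hi
    · simp [(mem_Ioi.1 hk).ne']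
    rcases eq_or_ne k j with rfl | hk'
    · simp [(mem_Ioi.1 hk).ne]
    · simp [hi, hk']
  simp only [hδ]
  simp only [Pi.single_apply, mul_add, mul_ite, mul_one, mul_zero, sum_add_distrib, sum_ite_eq,
    mem_univ, if_true]
  field_simp [hm i, hm k]
  ring

variable [CommRing R] [LocallyFiniteOrderBot ι]

theorem sum_sum_Ioi_mul_single_sub_single (f : ι → ι → R) (j : ι) :
    ∑ i, ∑ k ∈ Ioi i, f i k * ((Pi.single j 1 : ι → R) i - (Pi.single j 1 : ι → R) k) =
      ∑ k ∈ Ioi j, f j k - ∑ i ∈ Iio j, f i j := by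
  simp only [mul_sub, sum_sub_distrib, Pi.single_apply, mul_ite, mul_one, mul_zero, sum_ite_irrel,
    sum_const_zero, sum_ite_eq', mem_Ioi, mem_univ, if_true]
  rw [← sum_filter, filter_gt_eq_Iio]

theorem sum_sum_Ioi_mul_single_sub_single_of_antisymm {f : ι → ι → R}
    (hf : ∀ i k, f k i = -f i k) (j : ι) :
    ∑ i, ∑ k ∈ Ioi i, f i k * ((Pi.single j 1 : ι → R) i - (Pi.single j 1 : ι → R) k) =
      ∑ k ∈ {j}ᶜ, f j k := by
  rw [sum_sum_Ioi_mul_single_sub_single, ← Ioi_disjUnion_Iio, sum_disjUnion, sub_eq_add_neg,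
    ← sum_neg_distrib]
  simp only [hf _ j]

end SingleSums

theorem Complex.ofReal_single_apply {ι : Type*} [DecidableEq ι] (j : ι) (r : ℝ) (i : ι) :
    (((Pi.single j r : ι → ℝ) i : ℝ) : ℂ) = (Pi.single j (r : ℂ) : ι → ℂ) i :=
  Pi.apply_single (fun _ => ((↑) : ℝ → ℂ)) (fun _ => ofReal_zero) j r i

theorem StrictAnti.sinh_sub_pos {ι : Type*} [Preorder ι] {y : ι → ℝ} (hy : StrictAnti y)
    {i k : ι} (h : i < k) : 0 < Real.sinh (y i - y k) :=
  Real.sinh_pos_iff.2 (sub_pos.2 (hy h))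

theorem eventually_strictAnti {X ι E : Type*} [TopologicalSpace X] [Finite ι] [Preorder ι]
    [LinearOrder E] [TopologicalSpace E] [OrderClosedTopology E] {y : X → ι → E} {t : X}
    (hy : ContinuousAt y t) (hanti : StrictAnti (y t)) : ∀ᶠ s in 𝓝 t, StrictAnti (y s) := by
  simp only [StrictAnti, eventually_all]
  exact fun i k hik => ((continuous_apply k).continuousAt.comp hy).eventually_lt
    ((continuous_apply i).continuousAt.comp hy) (hanti hik)

section GroundState

variable {ι : Type*} [Fintype ι] [LinearOrder ι] [LocallyFiniteOrderTop ι] (β : ℂ) (m : ι → ℂ)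

noncomputable def groundState (y : ι → ℝ) : ℂ :=
  ∏ i, ∏ k ∈ Ioi i, (Real.sinh (y i - y k) : ℂ) ^ (β * m i * m k)

noncomputable def groundStateLogDeriv (y v : ι → ℝ) : ℂ :=
  ∑ i, ∑ k ∈ Ioi i, β * m i * m k * (Real.coth (y i - y k) * (v i - v k) : ℝ)

variable {β m}

theorem hasDerivAt_groundState_comp {y : ℝ → ι → ℝ} {v : ι → ℝ} {t : ℝ} (hy : HasDerivAt y v t)
    (hanti : StrictAnti (y t)) :
    HasDerivAt (fun s => groundState β m (y s))
      (groundState β m (y t) * groundStateLogDeriv β m (y t) v) t := by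
  refine HasDerivAt.finsetProd_of_logDeriv fun i _ =>
    HasDerivAt.finsetProd_of_logDeriv fun k hk => ?_
  exact ((hasDerivAt_pi.1 hy i).sub (hasDerivAt_pi.1 hy k)).sinh_cpow
    (hanti.sinh_sub_pos (mem_Ioi.1 hk)) _

theorem hasDerivAt_groundStateLogDeriv {y : ℝ → ι → ℝ} {v : ι → ℝ} {t : ℝ}
    (hy : HasDerivAt y v t) (hanti : StrictAnti (y t)) :
    HasDerivAt (fun s => groundStateLogDeriv β m (y s) v)
      (-∑ i, ∑ k ∈ Ioi i, m i * m k * (β / (Real.sinh (y t i - y t k) : ℂ) ^ 2) *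
        ((v i - v k : ℝ) : ℂ) ^ 2) t := by
  simp only [← sum_neg_distrib]
  refine HasDerivAt.fun_sum fun i _ => HasDerivAt.fun_sum fun k hk => ?_
  have hu := (hasDerivAt_pi.1 hy i).sub (hasDerivAt_pi.1 hy k)
  refine ((((Real.hasDerivAt_coth (sub_pos.2 (hanti (mem_Ioi.1 hk))).ne').comp t hu).mul_const
    (v i - v k)).ofReal_comp.const_mul (β * m i * m k)).congr_deriv ?_
  push_cast
  ring

theorem deriv_deriv_groundState_comp {y : ℝ → ι → ℝ} {v : ι → ℝ} {t : ℝ}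
    (hy : ∀ s, HasDerivAt y v s) (hanti : StrictAnti (y t)) :
    deriv (deriv fun s => groundState β m (y s)) t = groundState β m (y t) *
      (groundStateLogDeriv β m (y t) v ^ 2 -
        ∑ i, ∑ k ∈ Ioi i, m i * m k * (β / (Real.sinh (y t i - y t k) : ℂ) ^ 2) *
          ((v i - v k : ℝ) : ℂ) ^ 2) := by
  rw [sub_eq_add_neg]
  exact deriv_deriv_eq_of_logDeriv (ℓ := fun s => groundStateLogDeriv β m (y s) v)
    ((eventually_strictAnti (hy t).continuousAt hanti).mono fun s hs =>
      hasDerivAt_groundState_comp (hy s) hs)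
    (hasDerivAt_groundStateLogDeriv (hy t) hanti)

variable [LocallyFiniteOrderBot ι]

theorem groundStateLogDeriv_single (x : ι → ℝ) (j : ι) :
    groundStateLogDeriv β m x (Pi.single j 1) = β * m j * ∑ k, m k * Real.coth (x j - x k) := by
  simp only [groundStateLogDeriv, ofReal_mul, ofReal_sub, ofReal_single_apply, ofReal_one,
    ← mul_assoc]
  rw [sum_sum_Ioi_mul_single_sub_single_of_antisymm
    (f := fun i k => β * m i * m k * (Real.coth (x i - x k) : ℂ)), mul_sum,
    Fintype.sum_eq_add_sum_compl j, sub_self, Real.coth_zero, ofReal_zero, mul_zero, mul_zero,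
    zero_add]
  · exact sum_congr rfl fun _ _ => by ring
  · intro i k
    rw [← neg_sub, Real.coth_neg]
    push_cast
    ring

theorem deriv_deriv_groundState_update {x : ι → ℝ} (hx : StrictAnti x) (j : ι) :
    deriv (deriv fun s => groundState β m (Function.update x j s)) (x j) =
      groundState β m x * ((β * m j * ∑ k, m k * Real.coth (x j - x k)) ^ 2 -
        ∑ i, ∑ k ∈ Ioi i, m i * m k * (β / (Real.sinh (x i - x k) : ℂ) ^ 2) *
          ((Pi.single j 1 : ι → ℂ) i - (Pi.single j 1 : ι → ℂ) k) ^ 2) := by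
  have h := deriv_deriv_groundState_comp (β := β) (m := m) (t := x j)
    (fun s => hasDerivAt_update x j s) (by rwa [Function.update_eq_self])
  simpa only [Function.update_eq_self, groundStateLogDeriv_single, ofReal_sub,
    ofReal_single_apply, ofReal_one] using h

theorem sum_inv_mul_deriv_deriv_groundState_update (hm : ∀ j, m j ≠ 0) {x : ι → ℝ}
    (hx : StrictAnti x) :
    ∑ j, (m j)⁻¹ * deriv (deriv fun s => groundState β m (Function.update x j s)) (x j) =
      groundState β m x * (β ^ 2 * ∑ j, m j * (∑ k, m k * Real.coth (x j - x k)) ^ 2 -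
        ∑ i, ∑ k ∈ Ioi i, (m i + m k) * (β / (Real.sinh (x i - x k) : ℂ) ^ 2)) := by
  have hkin : ∑ j, (m j)⁻¹ * (β * m j * ∑ k, m k * Real.coth (x j - x k)) ^ 2 =
      β ^ 2 * ∑ j, m j * (∑ k, m k * Real.coth (x j - x k)) ^ 2 := by
    rw [mul_sum]
    exact sum_congr rfl fun j _ => by field_simp [hm j]
  rw [sum_congr rfl fun j _ => by rw [deriv_deriv_groundState_update hx j], ← hkin,
    ← sum_inv_mul_sum_sum_Ioi_mul_single_sub_single_sq hm, mul_sub, mul_sum, mul_sum,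
    ← sum_sub_distrib]
  exact sum_congr rfl fun _ _ => by ring

theorem three_mul_sum_mul_sum_coth_sq {x : ι → ℝ} (hx : Function.Injective x) (m : ι → ℂ) :
    3 * ∑ j, m j * (∑ k, m k * Real.coth (x j - x k)) ^ 2 =
      (∑ j, m j) ^ 3 - ∑ j, m j ^ 3 +
        3 * ∑ i, ∑ k ∈ Ioi i, m i * m k * (m i + m k) / (Real.sinh (x i - x k) : ℂ) ^ 2 := by
  rw [three_mul_sum_mul_sum_sq (c := fun j k => (Real.coth (x j - x k) : ℂ))
    (by simp [Real.coth_zero]) (fun i j k hij hjk hik => by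
      exact_mod_cast Real.coth_sub_mul_coth_sub_cyclic (hx.ne hij) (hx.ne hjk) (hx.ne hik)) m,
    ← sum_sum_Ioi_add_eq_sum_sum_off_diag]
  congr 2
  refine sum_congr rfl fun i _ => sum_congr rfl fun k hk => ?_
  have hcoth : (Real.coth (x i - x k) : ℂ) ^ 2 - 1 = ((Real.sinh (x i - x k) : ℂ) ^ 2)⁻¹ := by
    exact_mod_cast Real.coth_sq_sub_one (sub_ne_zero.2 (hx.ne (mem_Ioi.1 hk).ne))
  rw [← neg_sub (x i) (x k), Real.coth_neg, ofReal_neg, neg_sq, hcoth]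
  ring

end GroundState

theorem sen_theorem_trigonometric_general (N : ℕ) (β : ℂ)
    (mass : Fin N → ℂ) (hmass : ∀ j, mass j ≠ 0)
    (x : Fin N → ℝ) (hx : ∀ i j : Fin N, i < j → x j < x i)
    (γ : Fin N → Fin N → ℂ)
    (hγ : γ = fun j k => (mass j + mass k) * β * (mass j * mass k * β - 1))
    (Φ : (Fin N → ℝ) → ℂ)
    (hΦ : Φ = fun y => ∏ i : Fin N, ∏ j ∈ Finset.Ioi i,
        ((Real.sinh (y i - y j) : ℂ)) ^ (β * mass i * mass j)) :
    -(∑ j : Fin N, (mass j)⁻¹ *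
          deriv (deriv (fun s => Φ (Function.update x j s))) (x j))
      + (∑ i : Fin N, ∑ j ∈ Finset.Ioi i, γ i j / (Real.sinh (x i - x j) : ℂ) ^ 2) * Φ x
    = (-(β ^ 2 / 3) * ((∑ j, mass j) ^ 3 - ∑ j, mass j ^ 3)) * Φ x := by
  have hΦ' : Φ = groundState β mass := hΦ
  subst hΦ' hγ
  have hanti : StrictAnti x := fun i j h => hx i j h
  have hpot : ∑ i, ∑ k ∈ Ioi i, (mass i + mass k) * β * (mass i * mass k * β - 1) /
      (Real.sinh (x i - x k) : ℂ) ^ 2 =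
      β ^ 2 * ∑ i, ∑ k ∈ Ioi i,
          mass i * mass k * (mass i + mass k) / (Real.sinh (x i - x k) : ℂ) ^ 2 -
        ∑ i, ∑ k ∈ Ioi i, (mass i + mass k) * (β / (Real.sinh (x i - x k) : ℂ) ^ 2) := by
    simp only [mul_sum, ← sum_sub_distrib]
    exact sum_congr rfl fun _ _ => sum_congr rfl fun _ _ => by ring
  rw [sum_inv_mul_deriv_deriv_groundState_update hmass hanti, hpot]
  linear_combination (-(β ^ 2 / 3) * groundState β mass x) *
    three_mul_sum_mul_sum_coth_sq hanti.injective mass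

/-- Sen's theorem: the ground-state type eigenfunction of the generalised
trigonometric Calogero–Moser–Sutherland operator with particles of different
masses.  We work on the real chamber `x₁ > x₂ > … > x_N` (so that
`sinh (x_i - x_j) > 0` for `i < j`), with powers taken via the principal
complex power. -/
theorem sen_theorem_trigonometric (N : ℕ) (hN : 0 < N) (β : ℂ)
    (mass : Fin N → ℂ) (hmass : ∀ j, mass j ≠ 0)
    (x : Fin N → ℝ) (hx : ∀ i j : Fin N, i < j → x j < x i)
    (γ : Fin N → Fin N → ℂ)
    (hγ : γ = fun j k => (mass j + mass k) * β * (mass j * mass k * β - 1))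
    (Φ : (Fin N → ℝ) → ℂ)
    (hΦ : Φ = fun y => ∏ i : Fin N, ∏ j ∈ Finset.Ioi i,
        ((Real.sinh (y i - y j) : ℂ)) ^ (β * mass i * mass j)) :
    -(∑ j : Fin N, (mass j)⁻¹ *
          deriv (deriv (fun s => Φ (Function.update x j s))) (x j))
      + (∑ i : Fin N, ∑ j ∈ Finset.Ioi i, γ i j / (Real.sinh (x i - x j) : ℂ) ^ 2) * Φ x
    = (-(β ^ 2 / 3) * ((∑ j, mass j) ^ 3 - ∑ j, mass j ^ 3)) * Φ x :=
  sen_theorem_trigonometric_general N β mass hmass x hx γ hγ Φ hΦ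
end

section
/- Let N be a positive integer and m₁,…,m_N nonzero complex numbers, and set γ_{jk} = (m_j + m_k)β(m_j m_k β − 1) for a parameter β. Then Φ₀(x) = ∏_{i<j}(x_i − x_j)^{β m_i m_j} satisfies H Φ₀ = 0 where H = −∑_{j=1}^N (1/m_j) ∂²/∂x_j² + ∑_{j<k} γ_{jk}/(x_j − x_k)², on the domain where all x_i are distinct. -/
/-!
Along the `j`-th coordinate, on the chamber `x₁ > ⋯ > x_N` the function is
`Φ₀ = exp (∑_{i<k} a_ik log (x_i - x_k))` with `a_ik = β m_i m_k`, so
`∂_j² Φ₀ = Φ₀ (D_j² + D_j')` where `D_j = ∑_{k ≠ j} a_jk / (x_j - x_k)`.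
Expanding `D_j²`, the terms with three distinct indices cancel after summing over `j` with
weights `1 / m_j`, by the partial-fraction identity
`1/((a-b)(a-c)) + 1/((b-c)(b-a)) + 1/((c-a)(c-b)) = 0`; the remaining two-index terms
combine pairwise into `γ_jk / (x_j - x_k)²`.
-/

open Complex Finset Filter Topology

section PairSums

variable {ι M : Type*} [Fintype ι] [LinearOrder ι] [LocallyFiniteOrderTop ι]
  [LocallyFiniteOrderBot ι]

theorem sum_sum_erase_eq_sum_sum_Ioi [AddCommMonoid M] (g : ι → ι → M) :
    ∑ i, ∑ k ∈ univ.erase i, g i k = ∑ i, ∑ k ∈ Ioi i, (g i k + g k i) := by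
  simp only [← compl_singleton, ← Ioi_disjUnion_Iio, sum_disjUnion, sum_add_distrib]
  congr 1
  exact sum_comm' fun i k => by simp

theorem sum_sum_Ioi_sub_mul [CommRing M] (v : ι → M) (b : ι → ι → M)
    (hb : ∀ i k, b k i = -b i k) :
    ∑ i, ∑ k ∈ Ioi i, (v i - v k) * b i k = ∑ i, v i * ∑ k ∈ univ.erase i, b i k := by
  simp only [mul_sum, sum_sum_erase_eq_sum_sum_Ioi]
  exact sum_congr rfl fun i _ => sum_congr rfl fun k _ => by rw [hb]; ring

end PairSums

section Algebra

variable {ι K : Type*} [Fintype ι] [Field K]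

theorem sq_sum_eq_sum_add_sum_erase {α R : Type*} [DecidableEq α] [CommSemiring R]
    (s : Finset α) (c : α → R) :
    (∑ k ∈ s, c k) ^ 2 = ∑ k ∈ s, (c k ^ 2 + ∑ l ∈ s.erase k, c k * c l) := by
  rw [sq, sum_mul_sum]
  refine sum_congr rfl fun k hk => ?_
  rw [← add_sum_erase s _ hk, sq]

theorem sum_distinct_triples_eq_zero_of_cyclic [DecidableEq ι] [CharZero K] (f : ι → ι → ι → K)
    (hf : ∀ j k l, j ≠ k → j ≠ l → k ≠ l → f j k l + f k l j + f l j k = 0) :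
    ∑ j, ∑ k ∈ univ.erase j, ∑ l ∈ (univ.erase j).erase k, f j k l = 0 := by
  let g : ι × ι × ι → K := fun t =>
    if t.1 ≠ t.2.1 ∧ t.1 ≠ t.2.2 ∧ t.2.1 ≠ t.2.2 then f t.1 t.2.1 t.2.2 else 0
  -- `rot (j, k, l) = (k, l, j)`
  let rot : ι × ι × ι ≃ ι × ι × ι := (Equiv.prodComm ι (ι × ι)).trans (Equiv.prodAssoc ι ι ι)
  have hg : ∑ j, ∑ k ∈ univ.erase j, ∑ l ∈ (univ.erase j).erase k, f j k l = ∑ t, g t := by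
    simp only [g, Fintype.sum_prod_type, ← filter_ne', sum_filter]
    refine sum_congr rfl fun j _ => sum_congr rfl fun k _ => ?_
    by_cases hkj : k = j
    · simp [hkj]
    · simp only [if_pos hkj]
      exact sum_congr rfl fun l _ => by grind
  have hrot (h : ι × ι × ι → K) : ∑ t, h (rot t) = ∑ t, h t :=
    Fintype.sum_equiv rot _ _ fun _ => rfl
  have hcyc (t : ι × ι × ι) : g t + g (rot t) + g (rot (rot t)) = 0 := by
    obtain ⟨j, k, l⟩ := t
    simp only [g, rot, Equiv.trans_apply, Equiv.prodComm_apply, Prod.swap_prod_mk,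
      Equiv.prodAssoc_apply]
    by_cases h : j ≠ k ∧ j ≠ l ∧ k ≠ l
    · obtain ⟨hjk, hjl, hkl⟩ := h
      simp [hf j k l hjk hjl hkl, hjk, hjl, hkl, hjk.symm, hjl.symm, hkl.symm]
    · grind
  have h3 : (3 : K) * ∑ t, g t = 0 := by
    have := sum_eq_zero (s := univ) fun t _ => hcyc t
    rw [sum_add_distrib, sum_add_distrib, hrot (fun t => g (rot t)), hrot] at this
    linear_combination this
  rw [hg]
  simpa using h3

theorem sum_inv_mul_sq_sub_eq_sum_Ioi [LinearOrder ι] [LocallyFiniteOrderTop ι]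
    [LocallyFiniteOrderBot ι] [CharZero K] (β : K) (m X : ι → K) (hm : ∀ j, m j ≠ 0)
    (hX : Function.Injective X) :
    ∑ j, (m j)⁻¹ * ((∑ k ∈ univ.erase j, β * m j * m k / (X j - X k)) ^ 2
        - ∑ k ∈ univ.erase j, β * m j * m k / (X j - X k) ^ 2)
      = ∑ i, ∑ k ∈ Ioi i, (m i + m k) * β * (m i * m k * β - 1) / (X i - X k) ^ 2 := by
  have hsub {j k : ι} (hjk : j ≠ k) : X j - X k ≠ 0 := sub_ne_zero.2 (hX.ne hjk)
  have hcross : ∑ j, ∑ k ∈ univ.erase j, ∑ l ∈ (univ.erase j).erase k,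
      m j * m k * m l / ((X j - X k) * (X j - X l)) = 0 := by
    refine sum_distinct_triples_eq_zero_of_cyclic _ fun j k l hjk hjl hkl => ?_
    have := hsub hjk; have := hsub hjl; have := hsub hkl
    have := hsub hjk.symm; have := hsub hjl.symm; have := hsub hkl.symm
    field_simp
    ring
  have hdiag (j : ι) : (m j)⁻¹ * ((∑ k ∈ univ.erase j, β * m j * m k / (X j - X k)) ^ 2
        - ∑ k ∈ univ.erase j, β * m j * m k / (X j - X k) ^ 2)
      = ∑ k ∈ univ.erase j, (β ^ 2 * m j * m k ^ 2 - β * m k) / (X j - X k) ^ 2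
        + β ^ 2 * ∑ k ∈ univ.erase j, ∑ l ∈ (univ.erase j).erase k,
          m j * m k * m l / ((X j - X k) * (X j - X l)) := by
    rw [sq_sum_eq_sum_add_sum_erase, sum_add_distrib, add_sub_right_comm, mul_add, mul_sub,
      mul_sum, mul_sum, mul_sum, ← sum_sub_distrib, mul_sum]
    congr 1
    · exact sum_congr rfl fun k hk => by
        field_simp [hm j, hsub (ne_of_mem_erase hk).symm]
    · refine sum_congr rfl fun k hk => ?_
      rw [mul_sum, mul_sum]
      exact sum_congr rfl fun l hl => by
        field_simp [hm j, hsub (ne_of_mem_erase hk).symm,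
          hsub (ne_of_mem_erase (mem_of_mem_erase hl)).symm]
  simp only [hdiag, sum_add_distrib, ← mul_sum, hcross, mul_zero, add_zero]
  rw [sum_sum_erase_eq_sum_sum_Ioi]
  refine sum_congr rfl fun i _ => sum_congr rfl fun k _ => ?_
  rw [show (X k - X i) ^ 2 = (X i - X k) ^ 2 by ring]
  ring

end Algebra

section Calculus

theorem deriv_deriv_eq_of_eventuallyEq_exp {𝕜 : Type*} [NontriviallyNormedField 𝕜]
    [NormedAlgebra 𝕜 ℂ] {f g g' : 𝕜 → ℂ} {t : 𝕜} {g'' : ℂ}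
    (hf : f =ᶠ[𝓝 t] fun s => exp (g s)) (hg : ∀ᶠ s in 𝓝 t, HasDerivAt g (g' s) s)
    (hg' : HasDerivAt g' g'' t) : deriv (deriv f) t = f t * (g' t ^ 2 + g'') := by
  have hderiv : deriv f =ᶠ[𝓝 t] fun s => exp (g s) * g' s :=
    hf.deriv.trans (hg.mono fun s hs => hs.cexp.deriv)
  rw [hderiv.deriv_eq, ((hg.self_of_nhds.cexp).fun_mul hg').deriv, hf.self_of_nhds]
  ring

variable {ι : Type*}

theorem hasDerivAt_sum_div_sub (c : ι → ℂ) (x : ι → ℝ) (S : Finset ι) {t : ℝ}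
    (ht : ∀ k ∈ S, t ≠ x k) :
    HasDerivAt (fun s => ∑ k ∈ S, c k / ((s - x k : ℝ) : ℂ))
      (-∑ k ∈ S, c k / ((t - x k : ℝ) : ℂ) ^ 2) t := by
  rw [← sum_neg_distrib]
  refine HasDerivAt.fun_sum fun k hk => ?_
  have hsub : HasDerivAt (fun s : ℝ => ((s - x k : ℝ) : ℂ)) 1 t :=
    ((hasDerivAt_id t).sub_const (x k)).ofReal_comp
  have hne : ((t - x k : ℝ) : ℂ) ≠ 0 := ofReal_ne_zero.2 (sub_ne_zero.2 (ht k hk))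
  exact ((hasDerivAt_const t (c k)).fun_div hsub hne).congr_deriv (by ring)

theorem eventually_strictAnti_update [Finite ι] [LinearOrder ι] {x : ι → ℝ} (hx : StrictAnti x)
    (j : ι) : ∀ᶠ s in 𝓝 (x j), StrictAnti (Function.update x j s) := by
  have hc : Continuous (Function.update x j) := continuous_const.update j continuous_id
  simp only [StrictAnti, eventually_all]
  intro i k hik
  refine ((continuous_apply k).comp hc).continuousAt.eventually_lt
    ((continuous_apply i).comp hc).continuousAt ?_
  simpa using hx hik

end Calculus

section PairPow

variable {ι : Type*} [Fintype ι] [LinearOrder ι] [LocallyFiniteOrderTop ι]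

noncomputable def pairPow (a : ι → ι → ℂ) (y : ι → ℝ) : ℂ :=
  ∏ i, ∏ k ∈ Ioi i, ((y i - y k : ℝ) : ℂ) ^ a i k

noncomputable def pairLog (a : ι → ι → ℂ) (y : ι → ℝ) : ℂ :=
  ∑ i, ∑ k ∈ Ioi i, a i k * Real.log (y i - y k)

theorem pairPow_eq_exp_pairLog (a : ι → ι → ℂ) {y : ι → ℝ} (hy : StrictAnti y) :
    pairPow a y = exp (pairLog a y) := by
  simp only [pairPow, pairLog, exp_sum]
  refine prod_congr rfl fun i _ => prod_congr rfl fun k hk => ?_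
  have hpos : 0 < y i - y k := sub_pos.2 (hy (mem_Ioi.1 hk))
  rw [cpow_def_of_ne_zero (ofReal_ne_zero.2 hpos.ne'),
    ofReal_log hpos.le, mul_comm]

variable [LocallyFiniteOrderBot ι] {a : ι → ι → ℂ}

theorem hasDerivAt_pairLog_update (ha : ∀ i k, a k i = a i k) (x : ι → ℝ) (j : ι) {s : ℝ}
    (hs : Function.Injective (Function.update x j s)) :
    HasDerivAt (fun s => pairLog a (Function.update x j s))
      (∑ k ∈ univ.erase j, a j k / ((s - x k : ℝ) : ℂ)) s := by
  have hterm (i k : ι) (hik : i < k) : HasDerivAt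
      (fun s => a i k * Real.log (Function.update x j s i - Function.update x j s k))
      ((((Pi.single j 1 : ι → ℝ) i : ℂ) - (Pi.single j 1 : ι → ℝ) k) *
        (a i k / ((Function.update x j s i - Function.update x j s k : ℝ) : ℂ))) s := by
    have hlin := (hasDerivAt_pi.1 (hasDerivAt_update x j s) i).sub
      (hasDerivAt_pi.1 (hasDerivAt_update x j s) k)
    refine (((Real.hasDerivAt_log (sub_ne_zero.2 (hs.ne hik.ne))).comp s
      hlin).ofReal_comp.const_mul (a i k)).congr_deriv ?_
    push_cast
    ring
  refine (HasDerivAt.fun_sum fun i _ => HasDerivAt.fun_sum fun k hk =>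
    hterm i k (mem_Ioi.1 hk)).congr_deriv ?_
  rw [sum_sum_Ioi_sub_mul _ _ fun i k => by rw [ha, ← neg_sub, ofReal_neg, div_neg],
    Fintype.sum_eq_single j fun i hi => by simp [hi], Pi.single_eq_same, ofReal_one,
    one_mul]
  refine sum_congr rfl fun k hk => ?_
  rw [Function.update_self, Function.update_of_ne (ne_of_mem_erase hk)]

theorem deriv_deriv_pairPow_update (ha : ∀ i k, a k i = a i k) {x : ι → ℝ} (hx : StrictAnti x)
    (j : ι) :
    deriv (deriv fun s => pairPow a (Function.update x j s)) (x j)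
      = pairPow a x * ((∑ k ∈ univ.erase j, a j k / ((x j - x k : ℝ) : ℂ)) ^ 2
          - ∑ k ∈ univ.erase j, a j k / ((x j - x k : ℝ) : ℂ) ^ 2) := by
  have hnear := eventually_strictAnti_update hx j
  rw [deriv_deriv_eq_of_eventuallyEq_exp (g := fun s => pairLog a (Function.update x j s))
    (hnear.mono fun s hs => pairPow_eq_exp_pairLog a hs)
    (hnear.mono fun s hs => hasDerivAt_pairLog_update ha x j hs.injective)
    (hasDerivAt_sum_div_sub _ x _ fun k hk => hx.injective.ne (ne_of_mem_erase hk).symm),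
    Function.update_eq_self, sub_eq_add_neg]

end PairPow

theorem sen_theorem_rational_general (N : ℕ) (β : ℂ)
    (mass : Fin N → ℂ) (hmass : ∀ j, mass j ≠ 0)
    (x : Fin N → ℝ) (hx : ∀ i j : Fin N, i < j → x j < x i)
    (γ : Fin N → Fin N → ℂ)
    (hγ : γ = fun j k => (mass j + mass k) * β * (mass j * mass k * β - 1))
    (Φ : (Fin N → ℝ) → ℂ)
    (hΦ : Φ = fun y => ∏ i : Fin N, ∏ j ∈ Finset.Ioi i,
        (((y i - y j : ℝ) : ℂ)) ^ (β * mass i * mass j)) :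
    -(∑ j : Fin N, (mass j)⁻¹ *
          deriv (deriv (fun s => Φ (Function.update x j s))) (x j))
      + (∑ i : Fin N, ∑ j ∈ Finset.Ioi i, γ i j / ((x i - x j : ℝ) : ℂ) ^ 2) * Φ x
    = 0 := by
  have hΦ' : Φ = pairPow fun i k => β * mass i * mass k := hΦ
  have hanti : StrictAnti x := fun i j hij => hx i j hij
  have hsymm (i k : Fin N) : β * mass k * mass i = β * mass i * mass k := by ring
  have hinj : Function.Injective fun k => (x k : ℂ) :=
    ofReal_injective.comp hanti.injective
  subst hγ hΦ'
  simp only [deriv_deriv_pairPow_update hsymm hanti]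
  push_cast
  rw [← sum_inv_mul_sq_sub_eq_sum_Ioi β mass _ hmass hinj, sum_mul, ← sum_neg_distrib,
    ← sum_add_distrib]
  exact sum_eq_zero fun j _ => by ring

/-- Rational analogue of Sen's theorem: the ground-state type eigenfunction of
the rational multi-mass Calogero–Moser operator has eigenvalue `0`.  We work on
the real chamber `x₁ > x₂ > … > x_N` (so that `x_i - x_j > 0` for `i < j`),
with powers taken via the principal complex power. -/
theorem sen_theorem_rational (N : ℕ) (hN : 0 < N) (β : ℂ)
    (mass : Fin N → ℂ) (hmass : ∀ j, mass j ≠ 0)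
    (x : Fin N → ℝ) (hx : ∀ i j : Fin N, i < j → x j < x i)
    (γ : Fin N → Fin N → ℂ)
    (hγ : γ = fun j k => (mass j + mass k) * β * (mass j * mass k * β - 1))
    (Φ : (Fin N → ℝ) → ℂ)
    (hΦ : Φ = fun y => ∏ i : Fin N, ∏ j ∈ Finset.Ioi i,
        (((y i - y j : ℝ) : ℂ)) ^ (β * mass i * mass j)) :
    -(∑ j : Fin N, (mass j)⁻¹ *
          deriv (deriv (fun s => Φ (Function.update x j s))) (x j))
      + (∑ i : Fin N, ∑ j ∈ Finset.Ioi i, γ i j / ((x i - x j : ℝ) : ℂ) ^ 2) * Φ x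
    = 0 :=
  sen_theorem_rational_general N β mass hmass x hx γ hγ Φ hΦ
end

section
/- For positive integer m, the two integral representations of Ψ^{(2)}_m agree: for x₁ ≠ x₂ and Re(λ₁−λ₂) < 0, λ₁ ≠ λ₂, (λ₂−λ₁)^{m+1}/(m!(x₁−x₂)^m) · ∫_{x₁}^{∞}(z−x₁)^m(z−x₂)^m e^{(λ₁−λ₂)z}dz = m!(x₁−x₂)^{m+1}/(λ₁−λ₂)^m · Res_{z=x₁}[ e^{(λ₁−λ₂)z} / ((z−x₁)^{m+1}(z−x₂)^{m+1}) ]. -/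
/-!
Writing `z = x₁ + t` and expanding `(z - x₂)^m = (x₁ - x₂ + t)^m` binomially turns the ray
integral into a sum of Gamma integrals `∫₀^∞ tⁿ e^{μt} dt = n! / (-μ)^{n+1}`. By the Cauchy formula
for derivatives the circle integral is `2πi / m!` times the `m`-th derivative of
`e^{μz} (z - x₂)^{-(m+1)}` at `x₁`, and Leibniz's rule expands it into a sum with the same terms.
-/

open Complex MeasureTheory Set Filter Topology

section ray

variable {μ : ℂ}

lemma norm_ofReal_pow_mul_cexp (n : ℕ) {t : ℝ} (ht : 0 ≤ t) :
    ‖(t : ℂ) ^ n * cexp (μ * t)‖ = t ^ n * Real.exp (μ.re * t) := by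
  simp [Complex.norm_exp, abs_of_nonneg ht]

lemma integrableOn_Ioi_ofReal_pow_mul_cexp (hμ : μ.re < 0) (n : ℕ) :
    IntegrableOn (fun t : ℝ => (t : ℂ) ^ n * cexp (μ * t)) (Ioi 0) := by
  have hreal := integrableOn_rpow_mul_exp_neg_mul_rpow (s := n) (p := 1)
    (neg_one_lt_zero.trans_le n.cast_nonneg) one_pos (neg_pos.mpr hμ)
  refine hreal.mono' (by fun_prop) ((ae_restrict_iff' measurableSet_Ioi).mpr (ae_of_all _ ?_))
  intro t ht
  rw [norm_ofReal_pow_mul_cexp n (le_of_lt ht)]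
  simp

lemma tendsto_ofReal_pow_mul_cexp_atTop (hμ : μ.re < 0) (n : ℕ) :
    Tendsto (fun t : ℝ => (t : ℂ) ^ n * cexp (μ * t)) atTop (𝓝 0) := by
  rw [tendsto_zero_iff_norm_tendsto_zero]
  refine (tendsto_rpow_mul_exp_neg_mul_atTop_nhds_zero n _ (neg_pos.mpr hμ)).congr' ?_
  filter_upwards [eventually_ge_atTop 0] with t ht
  rw [norm_ofReal_pow_mul_cexp n ht]
  simp

theorem integral_Ioi_ofReal_pow_mul_cexp (hμ : μ.re < 0) (n : ℕ) :
    ∫ t in Ioi (0 : ℝ), (t : ℂ) ^ n * cexp (μ * t) = (n.factorial : ℂ) / (-μ) ^ (n + 1) := by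
  have hμ0 : μ ≠ 0 := by rintro rfl; simp at hμ
  induction n with
  | zero =>
    simpa [div_neg, neg_div] using integral_exp_mul_complex_Ioi hμ 0
  | succ n ih =>
    have hderiv (t : ℝ) : HasDerivAt (fun s : ℝ => (s : ℂ) ^ (n + 1) * cexp (μ * s))
        ((n + 1) * ((t : ℂ) ^ n * cexp (μ * t)) + μ * ((t : ℂ) ^ (n + 1) * cexp (μ * t))) t := by
      refine HasDerivAt.comp_ofReal (e := fun z : ℂ => z ^ (n + 1) * cexp (μ * z)) ?_
      exact ((hasDerivAt_pow (n + 1) (t : ℂ)).mul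
        ((hasDerivAt_id (t : ℂ)).const_mul μ).cexp).congr_deriv (by simp only [id]; push_cast; ring)
    have hint := integrableOn_Ioi_ofReal_pow_mul_cexp hμ
    have hftc := integral_Ioi_of_hasDerivAt_of_tendsto' (fun t _ => hderiv t)
      (((hint n).const_mul _).add ((hint (n + 1)).const_mul _))
      (tendsto_ofReal_pow_mul_cexp_atTop hμ (n + 1))
    have hpow (k : ℕ) : (-μ) ^ k ≠ 0 := pow_ne_zero _ (neg_ne_zero.mpr hμ0)
    rw [integral_add ((hint n).const_mul _) ((hint (n + 1)).const_mul _), integral_const_mul,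
      integral_const_mul] at hftc
    simp only [Complex.ofReal_zero, zero_pow (Nat.succ_ne_zero n), zero_mul, sub_zero] at hftc
    rw [eq_div_iff (hpow _)] at ih ⊢
    push_cast [Nat.factorial_succ]
    linear_combination (-(-μ) ^ (n + 1)) * hftc + (n + 1) * ih

theorem integral_Ioi_ofReal_pow_mul_add_pow_mul_cexp (hμ : μ.re < 0) (a : ℂ) (p n : ℕ) :
    ∫ t in Ioi (0 : ℝ), (t : ℂ) ^ p * (a + t) ^ n * cexp (μ * t)
      = ∑ k ∈ Finset.range (n + 1),
          a ^ k * n.choose k * ((p + (n - k)).factorial / (-μ) ^ (p + (n - k) + 1)) := by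
  have hterm (k : ℕ) (t : ℝ) : (t : ℂ) ^ p * (a ^ k * (t : ℂ) ^ (n - k) * n.choose k) * cexp (μ * t)
      = a ^ k * n.choose k * ((t : ℂ) ^ (p + (n - k)) * cexp (μ * t)) := by
    ring
  simp_rw [add_pow, Finset.mul_sum, Finset.sum_mul, hterm]
  rw [integral_finsetSum _ fun k _ =>
    (integrableOn_Ioi_ofReal_pow_mul_cexp hμ _).const_mul _]
  simp_rw [integral_const_mul, integral_Ioi_ofReal_pow_mul_cexp hμ]

end ray

theorem iteratedDeriv_inv_sub_pow {𝕜 : Type*} [NontriviallyNormedField 𝕜] (a b : 𝕜) (n j : ℕ) :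
    iteratedDeriv j (fun z => ((z - b) ^ (n + 1))⁻¹) a
      = (-1) ^ j * (n + 1).ascFactorial j * ((a - b) ^ (n + 1 + j))⁻¹ := by
  have hzpow : (fun z : 𝕜 => ((z - b) ^ (n + 1))⁻¹) = fun z => (z - b) ^ (-(n + 1 : ℤ)) := by
    ext z; rw [zpow_neg, ← Nat.cast_succ, zpow_natCast]
  have hsign : ((-1) ^ j : 𝕜) = ∏ _i ∈ Finset.range j, (-1 : 𝕜) := by simp
  rw [hzpow, iteratedDeriv_comp_sub_const j (fun z : 𝕜 => z ^ (-(n + 1 : ℤ))),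
    iteratedDeriv_eq_iterate]
  dsimp only
  rw [iter_deriv_zpow,
    show -(n + 1 : ℤ) - j = -((n + 1 + j : ℕ) : ℤ) by push_cast; ring, zpow_neg, zpow_natCast,
    Nat.ascFactorial_eq_prod_range, hsign, Nat.cast_prod, ← Finset.prod_mul_distrib]
  congr 1
  refine Finset.prod_congr rfl fun i _ => ?_
  push_cast
  ring

open Metric in
theorem circleIntegral_cexp_div_sub_pow_mul_sub_pow {c b μ : ℂ} {R : ℝ} (hR : 0 < R)
    (hb : R < ‖c - b‖) (p n : ℕ) :
    ∮ z in C(c, R), cexp (μ * z) / ((z - c) ^ (p + 1) * (z - b) ^ (n + 1))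
      = 2 * Real.pi * I / p.factorial * ∑ i ∈ Finset.range (p + 1),
          p.choose i * (μ ^ i * cexp (μ * c))
            * ((-1) ^ (p - i) * (n + 1).ascFactorial (p - i) * ((c - b) ^ (n + 1 + (p - i)))⁻¹) := by
  have hb_notMem : b ∉ closedBall c R := by
    rw [mem_closedBall, dist_comm, dist_eq_norm]
    exact hb.not_ge
  have hpow_ne {z : ℂ} (hz : z ∈ closedBall c R) : (z - b) ^ (n + 1) ≠ 0 :=
    pow_ne_zero _ (sub_ne_zero.mpr fun h => hb_notMem (h ▸ hz))
  have hg : DifferentiableOn ℂ (fun z => cexp (μ * z) * ((z - b) ^ (n + 1))⁻¹) (closedBall c R) :=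
    fun z hz => (by fun_prop : DifferentiableAt ℂ (fun z => cexp (μ * z)) z).mul
      ((by fun_prop : DifferentiableAt ℂ (fun z => (z - b) ^ (n + 1)) z).inv (hpow_ne hz))
        |>.differentiableWithinAt
  have hcauchy := hg.circleIntegral_one_div_sub_center_pow_smul hR p
  have hc : (c - b) ^ (n + 1) ≠ 0 := hpow_ne (mem_closedBall_self hR.le)
  have hinv : ContDiffAt ℂ p (fun z => ((z - b) ^ (n + 1))⁻¹) c := by fun_prop (disch := exact hc)
  rw [iteratedDeriv_fun_mul (by fun_prop) hinv] at hcauchy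
  simp only [smul_eq_mul, iteratedDeriv_cexp_const_mul, iteratedDeriv_inv_sub_pow] at hcauchy
  rw [← hcauchy]
  congr 1
  ext z
  rw [one_div, div_eq_mul_inv, mul_inv]
  ring

theorem selberg_eq_residue_Psi2_general (m : ℕ) (x₁ x₂ lam₁ lam₂ : ℂ)
    (hx : x₁ ≠ x₂) (hre : (lam₁ - lam₂).re < 0)
    (ε : ℝ) (hε : 0 < ε) (hε' : ε < ‖x₁ - x₂‖) :
    (lam₂ - lam₁) ^ (m + 1) / ((m.factorial : ℂ) * (x₁ - x₂) ^ m)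
        * (∫ t in Set.Ioi (0 : ℝ),
            ((x₁ + t) - x₁) ^ m * ((x₁ + t) - x₂) ^ m
              * Complex.exp ((lam₁ - lam₂) * (x₁ + t)))
      = (m.factorial : ℂ) * (x₁ - x₂) ^ (m + 1) / (lam₁ - lam₂) ^ m
          * ((2 * Real.pi * Complex.I)⁻¹ *
              ∮ z in C(x₁, ε),
                Complex.exp ((lam₁ - lam₂) * z)
                  / ((z - x₁) ^ (m + 1) * (z - x₂) ^ (m + 1))) := by
  rw [show lam₂ - lam₁ = -(lam₁ - lam₂) by ring]
  generalize lam₁ - lam₂ = μ at hre ⊢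
  have hμ : μ ≠ 0 := by rintro rfl; simp at hre
  have hray : ∫ t in Ioi (0 : ℝ), ((x₁ + t) - x₁) ^ m * ((x₁ + t) - x₂) ^ m * cexp (μ * (x₁ + t))
      = cexp (μ * x₁) * ∫ t in Ioi (0 : ℝ), (t : ℂ) ^ m * (x₁ - x₂ + t) ^ m * cexp (μ * t) := by
    rw [← integral_const_mul]
    congr 1
    ext t
    rw [mul_add, Complex.exp_add]
    ring
  rw [hray, integral_Ioi_ofReal_pow_mul_add_pow_mul_cexp hre,
    circleIntegral_cexp_div_sub_pow_mul_sub_pow hε hε', Finset.mul_sum, Finset.mul_sum,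
    Finset.mul_sum, Finset.mul_sum, Finset.mul_sum]
  refine Finset.sum_congr rfl fun k hk => ?_
  obtain ⟨d, rfl⟩ : ∃ d, m = k + d := ⟨m - k, by grind⟩
  have hfac := Nat.factorial_mul_ascFactorial (k + d) d
  rw [Nat.add_sub_cancel_left, ← hfac, Nat.cast_mul, neg_pow μ, neg_pow μ]
  -- beyond field arithmetic, the identity only needs `(-1) ^ (2 * d) = 1`
  rcases neg_one_pow_eq_or ℂ d with hd | hd <;> simp only [pow_add, hd] <;> field_simp

/-- The Selberg-type integral representation and the iterated-residue
representation of the two-particle rational Baker–Akhiezer function agree.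
The integral is over the ray `z = x₁ + t`, `t ∈ [0,∞)`; the residue at the
pole of order `m+1` at `z = x₁` is expressed as `(2πi)⁻¹` times the integral
over a small circle around `x₁` not containing `x₂`. -/
theorem selberg_eq_residue_Psi2 (m : ℕ) (hm : 0 < m) (x₁ x₂ lam₁ lam₂ : ℂ)
    (hx : x₁ ≠ x₂) (hre : (lam₁ - lam₂).re < 0) (hl : lam₁ ≠ lam₂)
    (ε : ℝ) (hε : 0 < ε) (hε' : ε < ‖x₁ - x₂‖) :
    (lam₂ - lam₁) ^ (m + 1) / ((m.factorial : ℂ) * (x₁ - x₂) ^ m)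
        * (∫ t in Set.Ioi (0 : ℝ),
            ((x₁ + t) - x₁) ^ m * ((x₁ + t) - x₂) ^ m
              * Complex.exp ((lam₁ - lam₂) * (x₁ + t)))
      = (m.factorial : ℂ) * (x₁ - x₂) ^ (m + 1) / (lam₁ - lam₂) ^ m
          * ((2 * Real.pi * Complex.I)⁻¹ *
              ∮ z in C(x₁, ε),
                Complex.exp ((lam₁ - lam₂) * z)
                  / ((z - x₁) ^ (m + 1) * (z - x₂) ^ (m + 1))) :=
  selberg_eq_residue_Psi2_general m x₁ x₂ lam₁ lam₂ hx hre ε hε hε'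
end

section
/- For m = 1 and k = 1: with x₁ ≠ x₂ and λ₁ ≠ λ₂, (m!/2πi) · ∮_{|z−x₁|=ε} [(x₁−x₂)² / ((z−x₁)²(z−x₂)²)] e^{λ₂(x₁+x₂−z)} e^{λ₁ z} dz · (λ₁−λ₂)^{−1} = (1 − 2/((λ₁−λ₂)(x₁−x₂))) e^{λ₁x₁+λ₂x₂}. -/
/-! Writing the integrand as `g z / (z - x₁) ^ 2` with
`g z = ((x₁ - x₂) / (z - x₂)) ^ 2 * exp ((λ₁ - λ₂) z + λ₂ (x₁ + x₂))`, which is holomorphic on the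
closed disc, Cauchy's integral formula turns the contour integral into `2πi g'(x₁)`, and the
logarithmic derivative `g'/g = (λ₁ - λ₂) - 2 / (z - x₂)` together with `g x₁ = exp (λ₁ x₁ + λ₂ x₂)`
gives the right-hand side. -/

open Complex Metric

theorem hasDerivAt_div_sub_sq_mul_exp (a b μ ν : ℂ) {c : ℂ} (hc : c ≠ b) :
    HasDerivAt (fun z => (a / (z - b)) ^ 2 * exp (μ * z + ν))
      ((μ - 2 / (c - b)) * ((a / (c - b)) ^ 2 * exp (μ * c + ν))) c := by
  have hcb : c - b ≠ 0 := sub_ne_zero.mpr hc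
  have hquot : HasDerivAt (fun z => a / (z - b)) (-a / (c - b) ^ 2) c := by
    simpa using (hasDerivAt_const c a).fun_div ((hasDerivAt_id' c).sub_const b) hcb
  have hexp : HasDerivAt (fun z => exp (μ * z + ν)) (exp (μ * c + ν) * μ) c := by
    simpa using (((hasDerivAt_id c).const_mul μ).add_const ν).cexp
  refine ((hquot.fun_pow 2).mul hexp).congr_deriv ?_
  simp only [Nat.cast_ofNat, Nat.add_one_sub_one, pow_one]
  field_simp
  ring

/-- The adding-particle residue formula instantiated at `k = m = 1` with
`Ψ^{(1)}_1(z, λ₁) = e^{λ₁ z}`, identified with the explicit form of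
`Ψ^{(2)}_1`.  The contour is a small positively oriented circle around `x₁`
not containing `x₂` (note `1! = 1`). -/
theorem adding_particle_k_one_m_one (x₁ x₂ lam₁ lam₂ : ℂ)
    (hx : x₁ ≠ x₂) (hl : lam₁ ≠ lam₂)
    (ε : ℝ) (hε : 0 < ε) (hε' : ε < ‖x₁ - x₂‖) :
    (2 * Real.pi * Complex.I)⁻¹ *
        (∮ z in C(x₁, ε),
          (x₁ - x₂) ^ 2 / ((z - x₁) ^ 2 * (z - x₂) ^ 2)
            * Complex.exp (lam₂ * (x₁ + x₂ - z)) * Complex.exp (lam₁ * z))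
        * (lam₁ - lam₂)⁻¹
      = (1 - 2 / ((lam₁ - lam₂) * (x₁ - x₂))) * Complex.exp (lam₁ * x₁ + lam₂ * x₂) := by
  set g : ℂ → ℂ := fun z => ((x₁ - x₂) / (z - x₂)) ^ 2 * exp ((lam₁ - lam₂) * z + lam₂ * (x₁ + x₂))
  have hderiv (z : ℂ) (hz : z ≠ x₂) := hasDerivAt_div_sub_sq_mul_exp (x₁ - x₂) x₂ (lam₁ - lam₂)
    (lam₂ * (x₁ + x₂)) hz
  have hball : ∀ z ∈ closedBall x₁ ε, z ≠ x₂ := by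
    rintro z hz rfl
    rw [mem_closedBall, dist_eq, norm_sub_rev] at hz
    linarith
  have hdiff : DifferentiableOn ℂ g (closedBall x₁ ε) := fun z hz =>
    (hderiv z (hball z hz)).differentiableAt.differentiableWithinAt
  have hintegrand : (fun z => (x₁ - x₂) ^ 2 / ((z - x₁) ^ 2 * (z - x₂) ^ 2)
      * exp (lam₂ * (x₁ + x₂ - z)) * exp (lam₁ * z)) = fun z => (1 / (z - x₁) ^ 2) • g z := by
    funext z
    rw [smul_eq_mul, mul_assoc, ← exp_add,
      show lam₂ * (x₁ + x₂ - z) + lam₁ * z = (lam₁ - lam₂) * z + lam₂ * (x₁ + x₂) by ring]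
    simp only [g, div_eq_mul_inv, mul_inv, one_mul, mul_pow, inv_pow]
    ring
  have hx₁₂ : x₁ - x₂ ≠ 0 := sub_ne_zero.mpr hx
  have hl₁₂ : lam₁ - lam₂ ≠ 0 := sub_ne_zero.mpr hl
  rw [hintegrand, hdiff.deriv_eq_smul_circleIntegral hε, (hderiv x₁ hx).deriv, smul_eq_mul,
    div_self hx₁₂, show (lam₁ - lam₂) * x₁ + lam₂ * (x₁ + x₂) = lam₁ * x₁ + lam₂ * x₂ by ring]
  field_simp
end
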